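/- arXiv:2506.12490 — 12 statements merged into one kernel-verified Lean document; each statement's English description precedes it below -/
import Mathlib

section
/- Let a, b > 0 be real numbers and let f, g : ℝ → (0, ∞) be functions such that f is monotonically increasing and x ↦ g(x)/f(x) is monotonically increasing. Then for any real x₁ < x₂ one has (b + g(x₁))/(a + f(x₁)) ≤ max{ b/a , (b + g(x₂))/(a + f(x₂)) }. Moreover, if the limit L = lim_{x→∞} (b + g(x))/(a + f(x)) exists, then for every x₀ ∈ ℝ one has (b + g(x₀))/(a + f(x₀)) ≤ max{ b/a , L }. -/
/-!
Write `c = b / a` and `r x = g x / f x`. Then `(b + g x) / (a + f x)` is the mediant of `c` and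
`r x`, i.e. the convex combination `c + t x * (r x - c)` with weight `t x = f x / (a + f x)`.
If `r x₁ ≤ c` the mediant at `x₁` is at most `c`. Otherwise `0 ≤ r x₁ - c ≤ r x₂ - c` and
`t x₁ ≤ t x₂`, so the combination can only grow from `x₁` to `x₂`. The limit statement follows by
letting `x₂ → ∞`.
-/

open Filter Topology

section Mediant

variable {a b f g f' g' : ℝ}

lemma add_div_add_eq_add_mul_sub (ha : 0 < a) (hf : 0 < f) :
    (b + g) / (a + f) = b / a + f / (a + f) * (g / f - b / a) := by
  field_simp
  ring

lemma add_div_add_le_div_of_div_le (ha : 0 < a) (hf : 0 < f) (h : g / f ≤ b / a) :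
    (b + g) / (a + f) ≤ b / a := by
  rw [add_div_add_eq_add_mul_sub ha hf, add_le_iff_nonpos_right]
  exact mul_nonpos_of_nonneg_of_nonpos (by positivity) (sub_nonpos.2 h)

lemma add_div_add_le_add_div_add (ha : 0 < a) (hf : 0 < f) (hff' : f ≤ f')
    (hc : b / a ≤ g / f) (hr : g / f ≤ g' / f') :
    (b + g) / (a + f) ≤ (b + g') / (a + f') := by
  have hf' : 0 < f' := hf.trans_le hff'
  have hweight : f / (a + f) ≤ f' / (a + f') := by
    rw [div_le_div_iff₀ (by positivity) (by positivity)]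
    nlinarith
  rw [add_div_add_eq_add_mul_sub ha hf, add_div_add_eq_add_mul_sub ha hf']
  gcongr

lemma add_div_add_le_max (ha : 0 < a) (hf : 0 < f) (hff' : f ≤ f') (hr : g / f ≤ g' / f') :
    (b + g) / (a + f) ≤ max (b / a) ((b + g') / (a + f')) := by
  rcases le_total (g / f) (b / a) with hle | hge
  · exact le_max_of_le_left (add_div_add_le_div_of_div_le ha hf hle)
  · exact le_max_of_le_right (add_div_add_le_add_div_add ha hf hff' hge hr)

end Mediant

lemma le_max_of_tendsto_atTop {α β : Type*} [Preorder α] [IsDirectedOrder α] [NoMaxOrder α]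
    [LinearOrder β] [TopologicalSpace β] [OrderClosedTopology β] {h : α → β} {c L : β}
    (hh : ∀ x y, x < y → h x ≤ max c (h y)) (hL : Tendsto h atTop (𝓝 L)) (x : α) :
    h x ≤ max c L := by
  have : Nonempty α := ⟨x⟩
  refine ge_of_tendsto (tendsto_const_nhds.max hL) ?_
  filter_upwards [eventually_gt_atTop x] with y hy
  exact hh x y hy

theorem stmt0_general (a b : ℝ) (ha : 0 < a)
    (f g : ℝ → ℝ) (hfpos : ∀ x, 0 < f x)
    (hf : Monotone f) (hgf : Monotone fun x => g x / f x) :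
    (∀ x₁ x₂ : ℝ, x₁ < x₂ →
        (b + g x₁) / (a + f x₁) ≤ max (b / a) ((b + g x₂) / (a + f x₂))) ∧
    (∀ L : ℝ, Tendsto (fun x => (b + g x) / (a + f x)) atTop (nhds L) →
        ∀ x₀ : ℝ, (b + g x₀) / (a + f x₀) ≤ max (b / a) L) := by
  have hmax : ∀ x₁ x₂ : ℝ, x₁ < x₂ →
      (b + g x₁) / (a + f x₁) ≤ max (b / a) ((b + g x₂) / (a + f x₂)) := fun x₁ x₂ hx =>
    add_div_add_le_max ha (hfpos x₁) (hf hx.le) (hgf hx.le)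
  exact ⟨hmax, fun L hL x₀ => le_max_of_tendsto_atTop hmax hL x₀⟩

theorem stmt0 (a b : ℝ) (ha : 0 < a) (hb : 0 < b)
    (f g : ℝ → ℝ) (hfpos : ∀ x, 0 < f x) (hgpos : ∀ x, 0 < g x)
    (hf : Monotone f) (hgf : Monotone fun x => g x / f x) :
    (∀ x₁ x₂ : ℝ, x₁ < x₂ →
        (b + g x₁) / (a + f x₁) ≤ max (b / a) ((b + g x₂) / (a + f x₂))) ∧
    (∀ L : ℝ, Tendsto (fun x => (b + g x) / (a + f x)) atTop (nhds L) →
        ∀ x₀ : ℝ, (b + g x₀) / (a + f x₀) ≤ max (b / a) L) :=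
  stmt0_general a b ha f g hfpos hf hgf
end

section
/- Fix a real α > 1, let F(x) = exp(−x^{−α}) for x > 0 and F(x) = 0 for x ≤ 0 (the Fréchet CDF, whose left endpoint is ν = 0), and let λ_i ≥ 0 be fixed. Let ψ : ℝ → [0, ∞) be a measurable function. For λ_j ≥ 0 define N(λ_j) = ∫_{−min(λ_i,λ_j)}^{∞} ψ(z) F(z + λ_j)/(z + λ_i) dz and D(λ_j) = ∫_{−min(λ_i,λ_j)}^{∞} ψ(z) F(z + λ_j) dz. Assume that for all λ_j ≥ 0 under consideration both integrals are finite and D(λ_j) > 0. Then the ratio λ_j ↦ N(λ_j)/D(λ_j) is monotonically increasing in λ_j on [0, ∞). -/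
open MeasureTheory Set

/-- The Fréchet CDF with shape `α`: `exp (-x^(-α))` for `x > 0`, `0` for `x ≤ 0`. -/
noncomputable def frechetCDF (α x : ℝ) : ℝ := if 0 < x then Real.exp (-(x ^ (-α))) else 0


lemma frechet_nonneg (α x : ℝ) : 0 ≤ frechetCDF α x := by
  unfold frechetCDF; split
  · positivity
  · exact le_rfl

lemma frechet_meas (α : ℝ) : Measurable (frechetCDF α) := by
  unfold frechetCDF
  exact Measurable.ite (measurableSet_lt measurable_const measurable_id)
    (((measurable_id.pow_const _).neg.exp)) measurable_const

-- the four point rpow inequality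
lemma rpow_four {α : ℝ} (hα : 0 < α) {z w a b : ℝ} (hzw : z ≤ w) (hab : a ≤ b)
    (hza : 0 < z + a) :
    (z + b) ^ (-α) + (w + a) ^ (-α) ≤ (z + a) ^ (-α) + (w + b) ^ (-α) := by
  have key : AntitoneOn (fun t => (z + t) ^ (-α) - (w + t) ^ (-α)) (Icc a b) := by
    apply antitoneOn_of_deriv_nonpos (convex_Icc a b)
    · apply ContinuousOn.sub
      · apply ContinuousOn.rpow_const (by fun_prop)
        intro t ht
        exact Or.inl (by nlinarith [ht.1])
      · apply ContinuousOn.rpow_const (by fun_prop)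
        intro t ht
        exact Or.inl (by nlinarith [ht.1])
    · intro t ht
      rw [interior_Icc] at ht
      have h1 : 0 < z + t := by nlinarith [ht.1]
      have h2 : 0 < w + t := by nlinarith [ht.1]
      exact (((hasDerivAt_id t).const_add z).rpow_const (p := -α) (Or.inl h1.ne')).sub
        (((hasDerivAt_id t).const_add w).rpow_const (p := -α) (Or.inl h2.ne')) |>.differentiableAt
        |>.differentiableWithinAt
    · intro t ht
      rw [interior_Icc] at ht
      have h1 : 0 < z + t := by nlinarith [ht.1]
      have h2 : 0 < w + t := by nlinarith [ht.1]
      have hd := (((hasDerivAt_id t).const_add z).rpow_const (p := -α) (Or.inl h1.ne')).sub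
        (((hasDerivAt_id t).const_add w).rpow_const (p := -α) (Or.inl h2.ne'))
      simp only [id] at hd
      rw [show (fun t => (z + t) ^ (-α) - (w + t) ^ (-α)) = ((fun y => (z + y) ^ (-α)) - fun y => (w + y) ^ (-α)) from rfl, hd.deriv]
      have : (w + t) ^ (-α - 1) ≤ (z + t) ^ (-α - 1) :=
        Real.rpow_le_rpow_of_nonpos h1 (by linarith) (by linarith)
      nlinarith [this]
  have := key (Set.mem_Icc.2 ⟨le_rfl, hab⟩) (Set.mem_Icc.2 ⟨hab, le_rfl⟩) hab
  simp only at this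
  linarith

lemma frechet_tp2 {α : ℝ} (hα : 0 < α) {a b z w : ℝ} (hab : a ≤ b) (hzw : z ≤ w) :
    frechetCDF α (z + a) * frechetCDF α (w + b) ≤ frechetCDF α (z + b) * frechetCDF α (w + a) := by
  by_cases hza : 0 < z + a
  · have hzb : 0 < z + b := by linarith
    have hwa : 0 < w + a := by linarith
    have hwb : 0 < w + b := by linarith
    simp only [frechetCDF, if_pos hza, if_pos hzb, if_pos hwa, if_pos hwb]
    rw [← Real.exp_add, ← Real.exp_add]
    apply Real.exp_le_exp.2
    have := rpow_four hα hzw hab hza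
    linarith
  · have : frechetCDF α (z + a) = 0 := by simp [frechetCDF, hza]
    rw [this, zero_mul]
    exact mul_nonneg (frechet_nonneg _ _) (frechet_nonneg _ _)

lemma pointwise_core {α li : ℝ} (hα : 0 < α) (ψ : ℝ → ℝ) (hψ : ∀ x, 0 ≤ ψ x)
    {a b z w : ℝ} (hab : a ≤ b) (hzw : z ≤ w) (hz : 0 < z + li) (hw : 0 < w + li) :
    ψ z * frechetCDF α (z + a) / (z + li) * (ψ w * frechetCDF α (w + b)) +
      ψ w * frechetCDF α (w + a) / (w + li) * (ψ z * frechetCDF α (z + b)) ≤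
    ψ z * frechetCDF α (z + b) / (z + li) * (ψ w * frechetCDF α (w + a)) +
      ψ w * frechetCDF α (w + b) / (w + li) * (ψ z * frechetCDF α (z + a)) := by
  have tp2 := frechet_tp2 hα hab hzw
  have huv : (w + li)⁻¹ ≤ (z + li)⁻¹ := inv_anti₀ hz (by linarith)
  have hvpos : 0 < (w + li)⁻¹ := inv_pos.2 hw
  simp only [div_eq_mul_inv]
  nlinarith [mul_nonneg (mul_nonneg (mul_nonneg (hψ z) (hψ w)) (sub_nonneg.2 huv))
    (sub_nonneg.2 tp2)]

lemma pointwise {α li : ℝ} (hα : 0 < α) (ψ : ℝ → ℝ) (hψ : ∀ x, 0 ≤ ψ x)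
    {a b z w : ℝ} (hab : a ≤ b) (hz : 0 < z + li) (hw : 0 < w + li) :
    ψ z * frechetCDF α (z + a) / (z + li) * (ψ w * frechetCDF α (w + b)) +
      ψ w * frechetCDF α (w + a) / (w + li) * (ψ z * frechetCDF α (z + b)) ≤
    ψ z * frechetCDF α (z + b) / (z + li) * (ψ w * frechetCDF α (w + a)) +
      ψ w * frechetCDF α (w + b) / (w + li) * (ψ z * frechetCDF α (z + a)) := by
  rcases le_total z w with h | h
  · exact pointwise_core hα ψ hψ hab h hz hw
  · have := pointwise_core hα ψ hψ hab h hw hz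
    linarith


theorem stmt1 (α : ℝ) (hα : 1 < α) (li : ℝ) (hli : 0 ≤ li)
    (ψ : ℝ → ℝ) (hψm : Measurable ψ) (hψ : ∀ x, 0 ≤ ψ x)
    (N D : ℝ → ℝ)
    (hN : ∀ lj, N lj = ∫ z in Ioi (-(min li lj)), ψ z * frechetCDF α (z + lj) / (z + li))
    (hD : ∀ lj, D lj = ∫ z in Ioi (-(min li lj)), ψ z * frechetCDF α (z + lj))
    (hNint : ∀ lj, 0 ≤ lj →
      IntegrableOn (fun z => ψ z * frechetCDF α (z + lj) / (z + li)) (Ioi (-(min li lj))))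
    (hDint : ∀ lj, 0 ≤ lj →
      IntegrableOn (fun z => ψ z * frechetCDF α (z + lj)) (Ioi (-(min li lj))))
    (hDpos : ∀ lj, 0 ≤ lj → 0 < D lj) :
    MonotoneOn (fun lj => N lj / D lj) (Ici 0) := by
  have hα0 : (0:ℝ) < α := by linarith
  intro a ha b hb hab
  simp only
  rw [div_le_div_iff₀ (hDpos a ha) (hDpos b hb)]
  set S : Set ℝ := Ioi (-(min li b)) with hSdef
  -- measurability of the ENNReal-valued integrands
  have mreal : ∀ l : ℝ, Measurable (fun z => ψ z * frechetCDF α (z + l)) :=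
    fun l => hψm.mul ((frechet_meas α).comp (measurable_id.add_const l))
  have mrealn : ∀ l : ℝ, Measurable (fun z => ψ z * frechetCDF α (z + l) / (z + li)) :=
    fun l => (mreal l).div (measurable_id.add_const li)
  have mf : ∀ l : ℝ, Measurable (fun z => ENNReal.ofReal (ψ z * frechetCDF α (z + l))) :=
    fun l => (mreal l).ennreal_ofReal
  have mn : ∀ l : ℝ, Measurable
      (fun z => ENNReal.ofReal (ψ z * frechetCDF α (z + l) / (z + li))) :=
    fun l => (mrealn l).ennreal_ofReal
  -- rewriting N, D as toReal of lintegrals over S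
  have main : ∀ l, 0 ≤ l → l ≤ b →
      N l = (∫⁻ z in S, ENNReal.ofReal (ψ z * frechetCDF α (z + l) / (z + li))).toReal ∧
      D l = (∫⁻ z in S, ENNReal.ofReal (ψ z * frechetCDF α (z + l))).toReal ∧
      (∫⁻ z in S, ENNReal.ofReal (ψ z * frechetCDF α (z + l) / (z + li))) ≠ ⊤ ∧
      (∫⁻ z in S, ENNReal.ofReal (ψ z * frechetCDF α (z + l))) ≠ ⊤ := by
    intro l hl hlb
    set T : Set ℝ := Ioi (-(min li l)) with hTdef
    have hTS : T ⊆ S := Ioi_subset_Ioi (neg_le_neg (min_le_min le_rfl hlb))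
    have hvanish : ∀ z, z ∈ S → z ∉ T → frechetCDF α (z + l) = 0 := by
      intro z hzS hzT
      rcases le_or_gt li l with hlil | hlil
      · exact absurd (show z ∈ T by
          simpa [hTdef, hSdef, min_eq_left hlil, min_eq_left (hlil.trans hlb)] using hzS) hzT
      · have : z ≤ -(min li l) := not_lt.1 hzT
        have hzl : z + l ≤ 0 := by
          rw [min_eq_right hlil.le] at this; linarith
        simp [frechetCDF, not_lt.2 hzl]
    have hext : ∀ f : ℝ → ℝ, (∀ z, frechetCDF α (z + l) = 0 → f z = 0) →
        (∫⁻ z in S, ENNReal.ofReal (f z)) = ∫⁻ z in T, ENNReal.ofReal (f z) := by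
      intro f hf
      rw [← lintegral_indicator measurableSet_Ioi, ← lintegral_indicator measurableSet_Ioi]
      congr 1
      funext z
      by_cases hzT : z ∈ T
      · rw [indicator_of_mem hzT, indicator_of_mem (hTS hzT)]
      · rw [indicator_of_notMem hzT]
        by_cases hzS : z ∈ S
        · rw [indicator_of_mem hzS, hf z (hvanish z hzS hzT), ENNReal.ofReal_zero]
        · rw [indicator_of_notMem hzS]
    have hposT : ∀ z ∈ T, (0:ℝ) < z + li := by
      intro z hz
      have : -(min li l) < z := hz
      have : min li l ≤ li := min_le_left _ _
      linarith [show -(min li l) < z from hz]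
    have hNeq : N l = (∫⁻ z in T, ENNReal.ofReal
        (ψ z * frechetCDF α (z + l) / (z + li))).toReal := by
      rw [hN l]
      exact integral_eq_lintegral_of_nonneg_ae
        ((ae_restrict_mem measurableSet_Ioi).mono fun z hz =>
          div_nonneg (mul_nonneg (hψ z) (frechet_nonneg α _)) (hposT z hz).le)
        (hNint l hl).aestronglyMeasurable
    have hDeq : D l = (∫⁻ z in T, ENNReal.ofReal
        (ψ z * frechetCDF α (z + l))).toReal := by
      rw [hD l]
      exact integral_eq_lintegral_of_nonneg_ae
        (Filter.Eventually.of_forall fun z =>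
          mul_nonneg (hψ z) (frechet_nonneg α _))
        (hDint l hl).aestronglyMeasurable
    have hextN := hext (fun z => ψ z * frechetCDF α (z + l) / (z + li))
      (fun z h => by simp [h])
    have hextD := hext (fun z => ψ z * frechetCDF α (z + l)) (fun z h => by simp [h])
    refine ⟨by rw [hNeq, hextN], by rw [hDeq, hextD], ?_, ?_⟩
    · rw [hextN]; exact (hNint l hl).setLIntegral_lt_top.ne
    · rw [hextD]; exact (hDint l hl).setLIntegral_lt_top.ne
  obtain ⟨hNa, hDa, hNafin, hDafin⟩ := main a ha hab
  obtain ⟨hNb, hDb, hNbfin, hDbfin⟩ := main b hb le_rfl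
  set LNa := ∫⁻ z in S, ENNReal.ofReal (ψ z * frechetCDF α (z + a) / (z + li)) with hLNa
  set LNb := ∫⁻ z in S, ENNReal.ofReal (ψ z * frechetCDF α (z + b) / (z + li)) with hLNb
  set LDa := ∫⁻ z in S, ENNReal.ofReal (ψ z * frechetCDF α (z + a)) with hLDa
  set LDb := ∫⁻ z in S, ENNReal.ofReal (ψ z * frechetCDF α (z + b)) with hLDb
  rw [hNa, hDa, hNb, hDb, ← ENNReal.toReal_mul, ← ENNReal.toReal_mul]
  apply ENNReal.toReal_mono (ENNReal.mul_ne_top hNbfin hDafin)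
  -- key inequality : LNa * LDb ≤ LNb * LDa
  have hposS : ∀ z ∈ S, (0:ℝ) < z + li := by
    intro z hz
    have h1 : -(min li b) < z := hz
    have h2 : min li b ≤ li := min_le_left _ _
    linarith
  have doubling : LNa * LDb + LNa * LDb ≤ LNb * LDa + LNb * LDa := by
    have lhs_eq : LNa * LDb + LNa * LDb =
        ∫⁻ z in S, (ENNReal.ofReal (ψ z * frechetCDF α (z + a) / (z + li)) * LDb +
          ENNReal.ofReal (ψ z * frechetCDF α (z + b)) * LNa) := by
      rw [lintegral_add_left ((mn a).mul_const _), lintegral_mul_const _ (mn a),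
        lintegral_mul_const _ (mf b)]
      ring
    have rhs_eq : LNb * LDa + LNb * LDa =
        ∫⁻ z in S, (ENNReal.ofReal (ψ z * frechetCDF α (z + b) / (z + li)) * LDa +
          ENNReal.ofReal (ψ z * frechetCDF α (z + a)) * LNb) := by
      rw [lintegral_add_left ((mn b).mul_const _), lintegral_mul_const _ (mn b),
        lintegral_mul_const _ (mf a)]
      ring
    rw [lhs_eq, rhs_eq]
    apply setLIntegral_mono (((mn b).mul_const _).add ((mf a).mul_const _))
    intro z hz
    have hzli := hposS z hz
    have inner_lhs : ENNReal.ofReal (ψ z * frechetCDF α (z + a) / (z + li)) * LDb +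
        ENNReal.ofReal (ψ z * frechetCDF α (z + b)) * LNa =
        ∫⁻ w in S, (ENNReal.ofReal (ψ z * frechetCDF α (z + a) / (z + li)) *
            ENNReal.ofReal (ψ w * frechetCDF α (w + b)) +
          ENNReal.ofReal (ψ z * frechetCDF α (z + b)) *
            ENNReal.ofReal (ψ w * frechetCDF α (w + a) / (w + li))) := by
      rw [lintegral_add_left ((mf b).const_mul _), lintegral_const_mul _ (mf b),
        lintegral_const_mul _ (mn a)]
    have inner_rhs : ENNReal.ofReal (ψ z * frechetCDF α (z + b) / (z + li)) * LDa +
        ENNReal.ofReal (ψ z * frechetCDF α (z + a)) * LNb =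
        ∫⁻ w in S, (ENNReal.ofReal (ψ z * frechetCDF α (z + b) / (z + li)) *
            ENNReal.ofReal (ψ w * frechetCDF α (w + a)) +
          ENNReal.ofReal (ψ z * frechetCDF α (z + a)) *
            ENNReal.ofReal (ψ w * frechetCDF α (w + b) / (w + li))) := by
      rw [lintegral_add_left ((mf a).const_mul _), lintegral_const_mul _ (mf a),
        lintegral_const_mul _ (mn b)]
    rw [inner_lhs]; simp only [Pi.add_apply]; rw [inner_rhs]
    apply setLIntegral_mono (((mf a).const_mul _).add ((mn b).const_mul _))
    intro w hw
    simp only [Pi.add_apply]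
    have hwli := hposS w hw
    have h1 : (0:ℝ) ≤ ψ z * frechetCDF α (z + a) / (z + li) :=
      div_nonneg (mul_nonneg (hψ z) (frechet_nonneg α _)) hzli.le
    have h2 : (0:ℝ) ≤ ψ z * frechetCDF α (z + b) := mul_nonneg (hψ z) (frechet_nonneg α _)
    have h3 : (0:ℝ) ≤ ψ z * frechetCDF α (z + b) / (z + li) :=
      div_nonneg h2 hzli.le
    have h4 : (0:ℝ) ≤ ψ z * frechetCDF α (z + a) := mul_nonneg (hψ z) (frechet_nonneg α _)
    have h5 : (0:ℝ) ≤ ψ w * frechetCDF α (w + b) := mul_nonneg (hψ w) (frechet_nonneg α _)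
    have h6 : (0:ℝ) ≤ ψ w * frechetCDF α (w + a) / (w + li) :=
      div_nonneg (mul_nonneg (hψ w) (frechet_nonneg α _)) hwli.le
    have h7 : (0:ℝ) ≤ ψ w * frechetCDF α (w + a) := mul_nonneg (hψ w) (frechet_nonneg α _)
    have h8 : (0:ℝ) ≤ ψ w * frechetCDF α (w + b) / (w + li) :=
      div_nonneg h5 hwli.le
    rw [← ENNReal.ofReal_mul h1, ← ENNReal.ofReal_mul h2,
      ← ENNReal.ofReal_mul h3, ← ENNReal.ofReal_mul h4,
      ← ENNReal.ofReal_add (mul_nonneg h1 h5) (mul_nonneg h2 h6),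
      ← ENNReal.ofReal_add (mul_nonneg h3 h7) (mul_nonneg h4 h8)]
    apply ENNReal.ofReal_le_ofReal
    have key := pointwise (li := li) hα0 ψ hψ hab hzli hwli
    nlinarith [key]
  exact (ENNReal.mul_le_mul_iff_right two_ne_zero ENNReal.ofNat_ne_top).1
    (by rw [two_mul, two_mul]; exact doubling)
end

section
/- Fix a real α > 1, let F(x) = 1 − x^{−α} for x ≥ 1 and F(x) = 0 for x < 1 (the Pareto CDF, whose left endpoint is ν = 1), and let λ_i ≥ 0 be fixed. Let ψ : ℝ → [0, ∞) be a measurable function. For λ_j ≥ 0 define N(λ_j) = ∫_{1−min(λ_i,λ_j)}^{∞} ψ(z) F(z + λ_j)/(z + λ_i) dz and D(λ_j) = ∫_{1−min(λ_i,λ_j)}^{∞} ψ(z) F(z + λ_j) dz. Assume that for all λ_j ≥ 0 under consideration both integrals are finite and D(λ_j) > 0. Then the ratio λ_j ↦ N(λ_j)/D(λ_j) is monotonically increasing in λ_j on [0, ∞). -/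
open MeasureTheory Set

/-- The Pareto CDF with shape `α`: `1 - x^(-α)` for `x ≥ 1`, `0` for `x < 1`. -/
noncomputable def paretoCDF (α x : ℝ) : ℝ := if 1 ≤ x then 1 - x ^ (-α) else 0

lemma paretoCDF_nonneg {α : ℝ} (hα : 0 ≤ α) (x : ℝ) : 0 ≤ paretoCDF α x := by
  unfold paretoCDF
  split
  · have : x ^ (-α) ≤ 1 :=
      Real.rpow_le_one_of_one_le_of_nonpos (by assumption) (neg_nonpos.2 hα)
    linarith
  · exact le_refl _

lemma paretoCDF_eq_zero {α x : ℝ} (hx : x ≤ 1) : paretoCDF α x = 0 := by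
  unfold paretoCDF
  split
  · have hx1 : x = 1 := le_antisymm hx (by assumption)
    simp [hx1]
  · rfl

lemma rpow_diff_antitone {α : ℝ} (hα : 0 < α) {δ : ℝ} (hδ : 0 ≤ δ) :
    AntitoneOn (fun x : ℝ => x ^ (-α) - (x + δ) ^ (-α)) (Ici 1) := by
  have hd : ∀ x : ℝ, 0 < x → HasDerivAt (fun x : ℝ => x ^ (-α) - (x + δ) ^ (-α))
      (-α * x ^ (-α - 1) - -α * (x + δ) ^ (-α - 1) * 1) x := by
    intro x hx
    have h1 : HasDerivAt (fun x : ℝ => x ^ (-α)) (-α * x ^ (-α - 1)) x :=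
      Real.hasDerivAt_rpow_const (Or.inl hx.ne')
    have hxδ : (0:ℝ) < x + δ := by linarith
    have h2 : HasDerivAt (fun x : ℝ => (x + δ) ^ (-α)) (-α * (x + δ) ^ (-α - 1) * 1) x :=
      by
        have := HasDerivAt.comp (h := fun y : ℝ => y + δ) x
          (Real.hasDerivAt_rpow_const (x := x + δ) (p := -α) (Or.inl hxδ.ne'))
          ((hasDerivAt_id x).add_const δ)
        exact this
    exact h1.sub h2
  apply antitoneOn_of_deriv_nonpos (convex_Ici 1)
  · intro x hx
    exact ((hd x (lt_of_lt_of_le one_pos hx)).continuousAt).continuousWithinAt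
  · intro x hx
    rw [interior_Ici] at hx
    exact ((hd x (lt_trans one_pos hx)).differentiableAt).differentiableWithinAt
  · intro x hx
    rw [interior_Ici] at hx
    have hx0 : (0:ℝ) < x := lt_trans one_pos hx
    rw [(hd x hx0).deriv]
    have hle : (x + δ) ^ (-α - 1) ≤ x ^ (-α - 1) :=
      Real.rpow_le_rpow_of_nonpos hx0 (by linarith) (by linarith)
    nlinarith

lemma paretoCDF_key {α : ℝ} (hα : 1 < α) {l1 l2 z y : ℝ} (hl : l1 ≤ l2) (hzy : z ≤ y) :
    paretoCDF α (z + l1) * paretoCDF α (y + l2)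
      ≤ paretoCDF α (z + l2) * paretoCDF α (y + l1) := by
  have hα0 : (0:ℝ) ≤ α := by linarith
  by_cases h : 1 ≤ z + l1
  · have hb : 1 ≤ z + l2 := by linarith
    have hc : 1 ≤ y + l1 := by linarith
    have hdd : 1 ≤ y + l2 := by linarith
    simp only [paretoCDF, if_pos h, if_pos hb, if_pos hc, if_pos hdd]
    have h1 := rpow_diff_antitone (by linarith : (0:ℝ) < α)
      (by linarith : (0:ℝ) ≤ l2 - l1) (mem_Ici.2 h) (mem_Ici.2 hc) (by linarith)
    simp only [show z + l1 + (l2 - l1) = z + l2 by ring,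
      show y + l1 + (l2 - l1) = y + l2 by ring] at h1
    have h2 : (z + l2) ^ (-α) ≤ 1 :=
      Real.rpow_le_one_of_one_le_of_nonpos hb (by linarith)
    have h3 : (y + l2) ^ (-α) ≤ (z + l2) ^ (-α) :=
      Real.rpow_le_rpow_of_nonpos (by linarith) (by linarith) (by linarith)
    have h4 : (y + l2) ^ (-α) ≤ (y + l1) ^ (-α) :=
      Real.rpow_le_rpow_of_nonpos (by linarith) (by linarith) (by linarith)
    have e3 : ((y + l1) ^ (-α) - (y + l2) ^ (-α)) * (1 - (z + l2) ^ (-α))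
        ≤ ((z + l1) ^ (-α) - (z + l2) ^ (-α)) * (1 - (y + l2) ^ (-α)) :=
      mul_le_mul h1 (by linarith) (by linarith) (by linarith)
    nlinarith [e3]
  · rw [show paretoCDF α (z + l1) = 0 from if_neg h, zero_mul]
    exact mul_nonneg (paretoCDF_nonneg hα0 _) (paretoCDF_nonneg hα0 _)

lemma chebyshev_aux {s : Set ℝ} (hs : MeasurableSet s) (f1 f2 g : ℝ → ℝ)
    (h1g : IntegrableOn (fun z => f1 z * g z) s)
    (h2g : IntegrableOn (fun z => f2 z * g z) s)
    (h1 : IntegrableOn f1 s) (h2 : IntegrableOn f2 s)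
    (hpt : ∀ z ∈ s, ∀ y ∈ s, z ≤ y → 0 ≤ (g z - g y) * (f2 z * f1 y - f1 z * f2 y)) :
    (∫ z in s, f1 z * g z) * ∫ z in s, f2 z ≤ (∫ z in s, f2 z * g z) * ∫ z in s, f1 z := by
  set μ := volume.restrict s with hμ
  set K : ℝ × ℝ → ℝ := fun p => f2 p.1 * g p.1 * f1 p.2 - f1 p.1 * g p.1 * f2 p.2 with hK
  have hKa : Integrable (fun p : ℝ × ℝ => f2 p.1 * g p.1 * f1 p.2) (μ.prod μ) :=
    h2g.mul_prod h1
  have hKb : Integrable (fun p : ℝ × ℝ => f1 p.1 * g p.1 * f2 p.2) (μ.prod μ) :=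
    h1g.mul_prod h2
  have hKint : Integrable K (μ.prod μ) := hKa.sub hKb
  have hsw : ∫ p, K p.swap ∂μ.prod μ = ∫ p, K p ∂μ.prod μ := integral_prod_swap K
  have hnn : 0 ≤ ∫ p, (K p + K p.swap) ∂μ.prod μ := by
    rw [hμ, Measure.prod_restrict s s]
    apply setIntegral_nonneg (hs.prod hs)
    rintro ⟨z, y⟩ ⟨hz, hy⟩
    rcases le_total z y with hzy | hzy
    · calc (0:ℝ) ≤ (g z - g y) * (f2 z * f1 y - f1 z * f2 y) := hpt z hz y hy hzy
        _ = K (z, y) + K (z, y).swap := by simp only [hK, Prod.swap]; ring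
    · calc (0:ℝ) ≤ (g y - g z) * (f2 y * f1 z - f1 y * f2 z) := hpt y hy z hz hzy
        _ = K (z, y) + K (z, y).swap := by simp only [hK, Prod.swap]; ring
  have hadd : ∫ p, (K p + K p.swap) ∂μ.prod μ
      = (∫ p, K p ∂μ.prod μ) + ∫ p, K p.swap ∂μ.prod μ :=
    integral_add hKint hKint.swap
  have hKpos : 0 ≤ ∫ p, K p ∂μ.prod μ := by
    rw [hadd, hsw] at hnn; linarith
  have e1 : ∫ p : ℝ × ℝ, f2 p.1 * g p.1 * f1 p.2 ∂μ.prod μ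
      = (∫ z, f2 z * g z ∂μ) * ∫ z, f1 z ∂μ :=
    integral_prod_mul (fun z => f2 z * g z) f1
  have e2 : ∫ p : ℝ × ℝ, f1 p.1 * g p.1 * f2 p.2 ∂μ.prod μ
      = (∫ z, f1 z * g z ∂μ) * ∫ z, f2 z ∂μ :=
    integral_prod_mul (fun z => f1 z * g z) f2
  have hsplit : ∫ p, K p ∂μ.prod μ
      = (∫ z, f2 z * g z ∂μ) * (∫ z, f1 z ∂μ) - (∫ z, f1 z * g z ∂μ) * ∫ z, f2 z ∂μ := by
    rw [hK]
    rw [integral_sub hKa hKb, e1, e2]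
  rw [hsplit] at hKpos
  linarith

theorem stmt2 (α : ℝ) (hα : 1 < α) (li : ℝ) (hli : 0 ≤ li)
    (ψ : ℝ → ℝ) (hψm : Measurable ψ) (hψ : ∀ x, 0 ≤ ψ x)
    (N D : ℝ → ℝ)
    (hN : ∀ lj, N lj = ∫ z in Ioi (1 - min li lj), ψ z * paretoCDF α (z + lj) / (z + li))
    (hD : ∀ lj, D lj = ∫ z in Ioi (1 - min li lj), ψ z * paretoCDF α (z + lj))
    (hNint : ∀ lj, 0 ≤ lj →
      IntegrableOn (fun z => ψ z * paretoCDF α (z + lj) / (z + li)) (Ioi (1 - min li lj)))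
    (hDint : ∀ lj, 0 ≤ lj →
      IntegrableOn (fun z => ψ z * paretoCDF α (z + lj)) (Ioi (1 - min li lj)))
    (hDpos : ∀ lj, 0 ≤ lj → 0 < D lj) :
    MonotoneOn (fun lj => N lj / D lj) (Ici 0) := by
  intro a ha b hb hab
  simp only [mem_Ici] at ha hb
  simp only
  rw [div_le_div_iff₀ (hDpos a ha) (hDpos b hb)]
  set s : Set ℝ := Ioi (1 - min li b) with hsdef
  have hmle : 1 - min li b ≤ 1 - min li a := by
    have : min li a ≤ min li b := min_le_min le_rfl hab
    linarith
  -- general extension lemma for this pair of sets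
  have hEqOn : ∀ f : ℝ → ℝ, (∀ z, z + a ≤ 1 → f z = 0) →
      EqOn f ((Ioi (1 - min li a)).indicator f) s := by
    intro f h0 z hz
    by_cases h : z ∈ Ioi (1 - min li a)
    · rw [indicator_of_mem h]
    · rw [indicator_of_notMem h]
      simp only [hsdef, mem_Ioi, not_lt] at h hz
      apply h0
      rcases min_choice li a with h3 | h3
      · exfalso
        have h4 : min li b ≤ li := min_le_left li b
        rw [h3] at h
        linarith
      · rw [h3] at h
        linarith
  have hEq : ∀ f : ℝ → ℝ, (∀ z, z + a ≤ 1 → f z = 0) →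
      ∫ z in Ioi (1 - min li a), f z = ∫ z in s, f z := by
    intro f h0
    rw [setIntegral_congr_fun measurableSet_Ioi (hEqOn f h0),
      setIntegral_indicator measurableSet_Ioi,
      inter_eq_self_of_subset_right (Ioi_subset_Ioi hmle)]
  have hIext : ∀ f : ℝ → ℝ, (∀ z, z + a ≤ 1 → f z = 0) →
      IntegrableOn f (Ioi (1 - min li a)) → IntegrableOn f s := by
    intro f h0 hf
    have h1 : IntegrableOn ((Ioi (1 - min li a)).indicator f) s :=
      ((integrable_indicator_iff measurableSet_Ioi).2 hf).integrableOn
    exact (h1.congr_fun (fun z hz => (hEqOn f h0 hz).symm) measurableSet_Ioi)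
  have hz1 : ∀ z : ℝ, z + a ≤ 1 → ψ z * paretoCDF α (z + a) / (z + li) = 0 := by
    intro z hz; rw [paretoCDF_eq_zero hz]; simp
  have hz2 : ∀ z : ℝ, z + a ≤ 1 → ψ z * paretoCDF α (z + a) = 0 := by
    intro z hz; rw [paretoCDF_eq_zero hz]; simp
  have hNa : N a = ∫ z in s, ψ z * paretoCDF α (z + a) / (z + li) := by
    rw [hN a]; exact hEq _ hz1
  have hDa : D a = ∫ z in s, ψ z * paretoCDF α (z + a) := by
    rw [hD a]; exact hEq _ hz2
  rw [hNa, hDa, hN b, hD b, ← hsdef]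
  have hI1g : IntegrableOn (fun z => ψ z * paretoCDF α (z + a) * (z + li)⁻¹) s := by
    have := hIext _ hz1 (hNint a ha)
    simpa [div_eq_mul_inv] using this
  have hI2g : IntegrableOn (fun z => ψ z * paretoCDF α (z + b) * (z + li)⁻¹) s := by
    have := hNint b hb
    rw [← hsdef] at this
    simpa [div_eq_mul_inv] using this
  have hI1 : IntegrableOn (fun z => ψ z * paretoCDF α (z + a)) s := hIext _ hz2 (hDint a ha)
  have hI2 : IntegrableOn (fun z => ψ z * paretoCDF α (z + b)) s := by
    have := hDint b hb; rwa [← hsdef] at this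
  simp only [div_eq_mul_inv]
  refine chebyshev_aux measurableSet_Ioi (fun z => ψ z * paretoCDF α (z + a))
    (fun z => ψ z * paretoCDF α (z + b)) (fun z => (z + li)⁻¹) hI1g hI2g hI1 hI2 ?_
  intro z hz y hy hzy
  have hzpos : (0:ℝ) < z + li := by
    have h4 : min li b ≤ li := min_le_left li b
    simp only [hsdef, mem_Ioi] at hz
    linarith
  have hypos : (0:ℝ) < y + li := by linarith
  have hg : (y + li)⁻¹ ≤ (z + li)⁻¹ := inv_anti₀ hzpos (by linarith)
  have key := paretoCDF_key hα hab hzy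
  have hψψ : 0 ≤ ψ z * ψ y := mul_nonneg (hψ z) (hψ y)
  have hfac : 0 ≤ ψ z * paretoCDF α (z + b) * (ψ y * paretoCDF α (y + a))
      - ψ z * paretoCDF α (z + a) * (ψ y * paretoCDF α (y + b)) := by
    nlinarith [key, hψψ]
  exact mul_nonneg (by linarith) hfac
end

section
/- Fix a real α > 1 and let F(x) = exp(−x^{−α}) and f(x) = α x^{−(α+1)} exp(−x^{−α}) for x > 0 be the Fréchet CDF and density. Then for every λ_i ≥ 0 and all natural numbers p, q, one has [∫_0^∞ (f(z+λ_i)/(z+λ_i)) (1 − F(z+λ_i))^p F(z+λ_i)^q dz] / [∫_0^∞ f(z+λ_i) (1 − F(z+λ_i))^p F(z+λ_i)^q dz] ≤ [∫_0^∞ (f(z+λ_i)/(z+λ_i)^{αp+1}) F(z+λ_i)^q dz] / [∫_0^∞ (f(z+λ_i)/(z+λ_i)^{αp}) F(z+λ_i)^q dz]. -/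
/-!
Put `x = z + λ`, `w(x) = f(x) F(x)^q / x^{αp}`, `g(x) = (1 - F(x))^p x^{αp}` and `u(x) = 1/x`.
The four integrands are `w g u`, `w g`, `w u` and `w`, so the claim is
`(∫ w g u)(∫ w) ≤ (∫ w u)(∫ w g)`: Chebyshev's integral inequality for the weight `w ≥ 0` and
the oppositely ordered `g` and `u`. Writing `s = x^{-α}`, `g = ((1 - e^{-s}) / s)^p`, and the
chord slope `(1 - e^{-s}) / s` of the concave function `1 - e^{-s}` decreases in `s`, so `g`
increases in `x`.
-/

open MeasureTheory Set Real

lemma antitoneOn_one_sub_exp_neg_div : AntitoneOn (fun s : ℝ => (1 - exp (-s)) / s) (Ioi 0) := by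
  intro x hx y hy hxy
  have := (convexOn_exp.comp_linearMap (-LinearMap.id)).secant_mono (mem_univ 0) (mem_univ x)
    (mem_univ y) hx.ne' hy.ne' hxy
  simp only [Function.comp_apply, LinearMap.neg_apply, LinearMap.id_apply, neg_zero, exp_zero,
    sub_zero] at this
  simp only [← neg_sub (exp _), neg_div]
  linarith

lemma monotoneOn_one_sub_exp_neg_rpow_pow_mul_rpow {α : ℝ} (hα : 0 < α) (p : ℕ) :
    MonotoneOn (fun x : ℝ => (1 - exp (-(x ^ (-α)))) ^ p * x ^ (α * p)) (Ioi 0) := by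
  have hpow : AntitoneOn (fun x : ℝ => x ^ (-α)) (Ioi 0) := fun x hx _ _ hxy =>
    rpow_le_rpow_of_nonpos hx hxy (neg_nonpos.2 hα.le)
  have hmaps : MapsTo (fun x : ℝ => x ^ (-α)) (Ioi 0) (Ioi 0) := fun x hx => rpow_pos_of_pos hx _
  have hbase := antitoneOn_one_sub_exp_neg_div.comp hpow hmaps
  refine MonotoneOn.congr (fun x hx y hy hxy => pow_le_pow_left₀ ?_ (hbase hx hy hxy) p) ?_
  · have hs : 0 < x ^ (-α) := hmaps hx
    have : exp (-(x ^ (-α))) ≤ 1 := exp_le_one_iff.2 (by linarith)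
    exact div_nonneg (by linarith) hs.le
  · intro x hx
    have hx : 0 < x := hx
    simp only [Function.comp, div_eq_mul_inv, mul_pow, rpow_neg hx.le, inv_inv,
      rpow_mul hx.le, rpow_natCast]

theorem AntivaryOn.integral_mul_mul_mul_integral_le {X : Type*} [MeasurableSpace X]
    {μ : Measure X} [SFinite μ] {s : Set X} {h g u : X → ℝ}
    (hs : ∀ᵐ x ∂μ, x ∈ s) (hh : ∀ x ∈ s, 0 ≤ h x) (hgu : AntivaryOn g u s)
    (hhgu : Integrable (fun x => h x * g x * u x) μ) (hhg : Integrable (fun x => h x * g x) μ)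
    (hhu : Integrable (fun x => h x * u x) μ) (hint : Integrable h μ) :
    (∫ x, h x * g x * u x ∂μ) * ∫ x, h x ∂μ ≤ (∫ x, h x * u x ∂μ) * ∫ x, h x * g x ∂μ := by
  -- `h x h y (g x - g y) (u x - u y) ≤ 0`, to be integrated over `μ ⊗ μ`
  have hpair : ∀ᵐ w ∂μ.prod μ,
      h w.1 * g w.1 * u w.1 * h w.2 + h w.1 * (h w.2 * g w.2 * u w.2) ≤
        h w.1 * u w.1 * (h w.2 * g w.2) + h w.1 * g w.1 * (h w.2 * u w.2) := by
    filter_upwards [Measure.quasiMeasurePreserving_fst.tendsto_ae.eventually hs,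
      Measure.quasiMeasurePreserving_snd.tendsto_ae.eventually hs] with w hw₁ hw₂
    nlinarith [mul_nonpos_of_nonneg_of_nonpos (mul_nonneg (hh _ hw₁) (hh _ hw₂))
      (hgu.sub_mul_sub_nonpos hw₁ hw₂)]
  have := integral_mono_ae ((hhgu.mul_prod hint).add (hint.mul_prod hhgu))
    ((hhu.mul_prod hhg).add (hhg.mul_prod hhu)) hpair
  rw [integral_add' (hhgu.mul_prod hint) (hint.mul_prod hhgu),
    integral_add' (hhu.mul_prod hhg) (hhg.mul_prod hhu),
    integral_prod_mul (fun x => h x * g x * u x) h, integral_prod_mul h (fun x => h x * g x * u x),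
    integral_prod_mul (fun x => h x * u x) (fun x => h x * g x),
    integral_prod_mul (fun x => h x * g x) (fun x => h x * u x)] at this
  linarith

lemma antivaryOn_one_sub_pow_mul_rpow_inv_of_frechet {α li : ℝ} (hα : 0 < α) (hli : 0 ≤ li)
    (p : ℕ) {F : ℝ → ℝ} (hF : ∀ x, 0 < x → F x = exp (-(x ^ (-α)))) :
    AntivaryOn (fun z => (1 - F (z + li)) ^ p * (z + li) ^ (α * (p : ℝ))) (fun z => (z + li)⁻¹)
      (Ioi 0) := by
  have hpos : MapsTo (· + li) (Ioi (0:ℝ)) (Ioi 0) := fun z (hz : 0 < z) =>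
    show 0 < z + li by linarith
  refine MonotoneOn.antivaryOn ?_ fun x hx y _ hxy => inv_anti₀ (hpos hx) (add_le_add_left hxy li)
  exact ((monotoneOn_one_sub_exp_neg_rpow_pow_mul_rpow hα p).comp
    (fun _ _ _ _ h => add_le_add_left h li) hpos).congr
    fun z hz => by simp only [Function.comp, hF _ (hpos hz)]

theorem stmt3 (α : ℝ) (hα : 1 < α) (li : ℝ) (hli : 0 ≤ li) (p q : ℕ)
    (F f : ℝ → ℝ)
    (hF : ∀ x, 0 < x → F x = Real.exp (-(x ^ (-α))))
    (hf : ∀ x, 0 < x → f x = α * x ^ (-(α + 1)) * Real.exp (-(x ^ (-α))))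
    (h1 : IntegrableOn
      (fun z => f (z + li) / (z + li) * (1 - F (z + li)) ^ p * F (z + li) ^ q) (Ioi 0))
    (h2 : IntegrableOn
      (fun z => f (z + li) * (1 - F (z + li)) ^ p * F (z + li) ^ q) (Ioi 0))
    (h3 : IntegrableOn
      (fun z => f (z + li) / (z + li) ^ (α * (p : ℝ) + 1) * F (z + li) ^ q) (Ioi 0))
    (h4 : IntegrableOn
      (fun z => f (z + li) / (z + li) ^ (α * (p : ℝ)) * F (z + li) ^ q) (Ioi 0))
    (h2pos : 0 < ∫ z in Ioi (0:ℝ), f (z + li) * (1 - F (z + li)) ^ p * F (z + li) ^ q)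
    (h4pos : 0 < ∫ z in Ioi (0:ℝ), f (z + li) / (z + li) ^ (α * (p : ℝ)) * F (z + li) ^ q) :
    (∫ z in Ioi (0:ℝ), f (z + li) / (z + li) * (1 - F (z + li)) ^ p * F (z + li) ^ q) /
      (∫ z in Ioi (0:ℝ), f (z + li) * (1 - F (z + li)) ^ p * F (z + li) ^ q) ≤
    (∫ z in Ioi (0:ℝ), f (z + li) / (z + li) ^ (α * (p : ℝ) + 1) * F (z + li) ^ q) /
      (∫ z in Ioi (0:ℝ), f (z + li) / (z + li) ^ (α * (p : ℝ)) * F (z + li) ^ q) := by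
  set w : ℝ → ℝ := fun z => f (z + li) / (z + li) ^ (α * (p : ℝ)) * F (z + li) ^ q
  set g : ℝ → ℝ := fun z => (1 - F (z + li)) ^ p * (z + li) ^ (α * (p : ℝ))
  set u : ℝ → ℝ := fun z => (z + li)⁻¹
  have hpos : ∀ z ∈ Ioi (0:ℝ), 0 < z + li := fun z (hz : 0 < z) => by linarith
  have eq_wgu : EqOn (fun z => f (z + li) / (z + li) * (1 - F (z + li)) ^ p * F (z + li) ^ q)
      (fun z => w z * g z * u z) (Ioi 0) := fun z hz => by
    have := hpos z hz
    simp only [w, g, u]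
    field_simp
  have eq_wg : EqOn (fun z => f (z + li) * (1 - F (z + li)) ^ p * F (z + li) ^ q)
      (fun z => w z * g z) (Ioi 0) := fun z hz => by
    have := hpos z hz
    simp only [w, g]
    field_simp
  have eq_wu : EqOn (fun z => f (z + li) / (z + li) ^ (α * (p : ℝ) + 1) * F (z + li) ^ q)
      (fun z => w z * u z) (Ioi 0) := fun z hz => by
    have := hpos z hz
    simp only [w, u, rpow_add this, rpow_one]
    field_simp
  have hw : ∀ z ∈ Ioi (0:ℝ), 0 ≤ w z := fun z hz => by
    have := hpos z hz
    simp only [w, hf _ this, hF _ this]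
    positivity
  have key := (antivaryOn_one_sub_pow_mul_rpow_inv_of_frechet (zero_lt_one.trans hα) hli p hF
    ).integral_mul_mul_mul_integral_le (ae_restrict_mem measurableSet_Ioi) hw
    (h1.congr_fun eq_wgu measurableSet_Ioi) (h2.congr_fun eq_wg measurableSet_Ioi)
    (h3.congr_fun eq_wu measurableSet_Ioi) h4
  rw [setIntegral_congr_fun measurableSet_Ioi eq_wg] at h2pos
  rw [setIntegral_congr_fun measurableSet_Ioi eq_wgu, setIntegral_congr_fun measurableSet_Ioi eq_wg,
    setIntegral_congr_fun measurableSet_Ioi eq_wu, div_le_div_iff₀ h2pos h4pos]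
  exact key
end

section
/- Let α > 1 be real and let θ, n be integers with 1 ≤ θ ≤ n. Then B(θ + 1/α, n + 1 − θ) / B(θ, n + 1 − θ) ≤ (2α/(α+1)) · ((θ + 1/α)/(n + 1))^{1/α}, where B(a,b) is the Beta function. -/
/-- The real Beta function, `B(a,b) = Γ(a)Γ(b)/Γ(a+b)`. -/
noncomputable def realBeta (a b : ℝ) : ℝ := Real.Gamma a * Real.Gamma b / Real.Gamma (a + b)

open Real

lemma gamma_add_le (x s : ℝ) (hx : 0 < x) (hs : 0 < s) (hs1 : s < 1) :
    Gamma (x + s) ≤ Gamma x * x ^ s := by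
  have h := Gamma_mul_add_mul_le_rpow_Gamma_mul_rpow_Gamma (s := x) (t := x + 1)
    (a := 1 - s) (b := s) hx (by linarith) (by linarith) hs (by ring)
  have hg : 0 < Gamma x := Gamma_pos_of_pos hx
  have e1 : (1 - s) * x + s * (x + 1) = x + s := by ring
  rw [e1, Gamma_add_one hx.ne'] at h
  calc Gamma (x + s) ≤ Gamma x ^ (1 - s) * (x * Gamma x) ^ s := h
    _ = Gamma x * x ^ s := by
        rw [mul_rpow hx.le hg.le, ← mul_assoc, mul_comm (Gamma x ^ (1-s)),
          mul_assoc, ← rpow_add hg]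
        simp [mul_comm]

lemma gamma_ge (x s : ℝ) (hx : 0 < x) (hs : 0 < s) (hs1 : s < 1) :
    Gamma (x + 1) ≤ Gamma (x + 1 + s) * (x + s) ^ (-s) := by
  have hxs : 0 < x + s := by linarith
  have h := Gamma_mul_add_mul_le_rpow_Gamma_mul_rpow_Gamma (s := x + s) (t := x + 1 + s)
    (a := s) (b := 1 - s) hxs (by linarith) hs (by linarith) (by ring)
  have e1 : s * (x + s) + (1 - s) * (x + 1 + s) = x + 1 := by ring
  have e2 : x + 1 + s = (x + s) + 1 := by ring
  have hg : 0 < Gamma (x + s) := Gamma_pos_of_pos hxs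
  have hg2 : 0 < Gamma (x + 1 + s) := Gamma_pos_of_pos (by linarith)
  rw [e1] at h
  have e3 : Gamma (x + s) = Gamma (x + 1 + s) * (x + s)⁻¹ := by
    rw [e2, Gamma_add_one hxs.ne']; field_simp
  calc Gamma (x + 1) ≤ Gamma (x + s) ^ s * Gamma (x + 1 + s) ^ (1 - s) := h
    _ = Gamma (x + 1 + s) * (x + s) ^ (-s) := by
        rw [e3, mul_rpow hg2.le (inv_nonneg.mpr hxs.le), mul_assoc, mul_comm ((x+s)⁻¹ ^ s),
          ← mul_assoc, ← rpow_add hg2, ← rpow_neg_one (x + s), ← rpow_mul hxs.le]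
        norm_num

theorem stmt7 (α : ℝ) (hα : 1 < α) (θ n : ℕ) (hθ : 1 ≤ θ) (hn : θ ≤ n) :
    realBeta ((θ:ℝ) + 1/α) ((n:ℝ) + 1 - (θ:ℝ)) / realBeta (θ:ℝ) ((n:ℝ) + 1 - (θ:ℝ)) ≤
      (2 * α / (α + 1)) * (((θ:ℝ) + 1/α) / ((n:ℝ) + 1)) ^ (1/α) := by
  set s : ℝ := 1/α with hsdef
  have hα0 : (0:ℝ) < α := by linarith
  have hs0 : 0 < s := by positivity
  have hs1 : s < 1 := by rw [hsdef]; rw [div_lt_one hα0]; linarith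
  have hT1 : (1:ℝ) ≤ (θ:ℝ) := by exact_mod_cast hθ
  have hTN : (θ:ℝ) ≤ (n:ℝ) := by exact_mod_cast hn
  have hT0 : (0:ℝ) < (θ:ℝ) := by linarith
  have hM : (0:ℝ) < (n:ℝ) + 1 - (θ:ℝ) := by linarith
  have hN1 : (0:ℝ) < (n:ℝ) + 1 := by linarith
  have hNs : (0:ℝ) < (n:ℝ) + s := by linarith
  have gT := Gamma_pos_of_pos hT0
  have gTs := Gamma_pos_of_pos (show (0:ℝ) < (θ:ℝ) + s by linarith)
  have gM := Gamma_pos_of_pos hM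
  have gN1 := Gamma_pos_of_pos hN1
  have gN1s := Gamma_pos_of_pos (show (0:ℝ) < (n:ℝ) + 1 + s by linarith)
  -- rewrite the ratio
  have e1 : (θ:ℝ) + s + ((n:ℝ) + 1 - (θ:ℝ)) = (n:ℝ) + 1 + s := by ring
  have e2 : (θ:ℝ) + ((n:ℝ) + 1 - (θ:ℝ)) = (n:ℝ) + 1 := by ring
  have hratio : realBeta ((θ:ℝ) + s) ((n:ℝ) + 1 - (θ:ℝ)) / realBeta (θ:ℝ) ((n:ℝ) + 1 - (θ:ℝ))
      = (Gamma ((θ:ℝ) + s) * Gamma ((n:ℝ) + 1)) / (Gamma (θ:ℝ) * Gamma ((n:ℝ) + 1 + s)) := by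
    rw [realBeta, realBeta, e1, e2]
    field_simp
  rw [hratio]
  -- bound numerator pieces
  have hA : Gamma ((θ:ℝ) + s) ≤ Gamma (θ:ℝ) * (θ:ℝ) ^ s := gamma_add_le _ _ hT0 hs0 hs1
  have hB : Gamma ((n:ℝ) + 1) ≤ Gamma ((n:ℝ) + 1 + s) * ((n:ℝ) + s) ^ (-s) := by
    have := gamma_ge (n:ℝ) s (by linarith) hs0 hs1
    exact this
  have step1 : (Gamma ((θ:ℝ) + s) * Gamma ((n:ℝ) + 1)) / (Gamma (θ:ℝ) * Gamma ((n:ℝ) + 1 + s))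
      ≤ (θ:ℝ) ^ s * ((n:ℝ) + s) ^ (-s) := by
    rw [div_le_iff₀ (by positivity)]
    calc Gamma ((θ:ℝ) + s) * Gamma ((n:ℝ) + 1)
        ≤ (Gamma (θ:ℝ) * (θ:ℝ) ^ s) * (Gamma ((n:ℝ) + 1 + s) * ((n:ℝ) + s) ^ (-s)) := by
          apply mul_le_mul hA hB gN1.le (by positivity)
      _ = (θ:ℝ) ^ s * ((n:ℝ) + s) ^ (-s) * (Gamma (θ:ℝ) * Gamma ((n:ℝ) + 1 + s)) := by ring
  refine step1.trans ?_
  -- now pure rpow arithmetic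
  have hTs : (0:ℝ) < (θ:ℝ) + s := by linarith
  have key1 : (θ:ℝ) ^ s ≤ ((θ:ℝ) + s) ^ s :=
    rpow_le_rpow hT0.le (by linarith) hs0.le
  have key2 : (((n:ℝ) + 1) / ((n:ℝ) + s)) ^ s ≤ 2 / (1 + s) := by
    have hb1 : (1:ℝ) ≤ ((n:ℝ) + 1) / ((n:ℝ) + s) := by
      rw [le_div_iff₀ hNs]; linarith
    have h1 : (((n:ℝ) + 1) / ((n:ℝ) + s)) ^ s ≤ (((n:ℝ) + 1) / ((n:ℝ) + s)) ^ (1:ℝ) :=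
      rpow_le_rpow_of_exponent_le hb1 hs1.le
    rw [rpow_one] at h1
    refine h1.trans ?_
    rw [div_le_div_iff₀ hNs (by linarith)]
    have hN1' : (1:ℝ) ≤ (n:ℝ) := by linarith
    nlinarith
  have hcoef : 2 * α / (α + 1) = 2 / (1 + s) := by
    rw [hsdef]; field_simp
  rw [hcoef]
  have expand : (((θ:ℝ) + s) / ((n:ℝ) + 1)) ^ s = ((θ:ℝ) + s) ^ s / ((n:ℝ) + 1) ^ s :=
    div_rpow hTs.le hN1.le s
  rw [expand]
  have expand2 : (((n:ℝ) + 1) / ((n:ℝ) + s)) ^ s = ((n:ℝ) + 1) ^ s / ((n:ℝ) + s) ^ s :=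
    div_rpow hN1.le hNs.le s
  rw [expand2] at key2
  have hNs_pow : (0:ℝ) < ((n:ℝ) + s) ^ s := by positivity
  have hN1_pow : (0:ℝ) < ((n:ℝ) + 1) ^ s := by positivity
  have hrw : ((n:ℝ) + s) ^ (-s) = (((n:ℝ) + s) ^ s)⁻¹ := by
    rw [rpow_neg hNs.le]
  rw [hrw]
  have hstep : ((((n:ℝ) + s) ^ s))⁻¹ ≤ 2 / (1 + s) * ((((n:ℝ) + 1) ^ s)⁻¹) := by
    have h2 : (1:ℝ) / (((n:ℝ) + s) ^ s) ≤ 2 / ((1 + s) * (((n:ℝ) + 1) ^ s)) := by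
      rw [div_le_div_iff₀ hNs_pow (by positivity)]
      rw [div_le_div_iff₀ hNs_pow (by linarith : (0:ℝ) < 1 + s)] at key2
      nlinarith [hN1_pow, hNs_pow, hs0]
    calc ((((n:ℝ) + s) ^ s))⁻¹ = 1 / (((n:ℝ) + s) ^ s) := (one_div _).symm
      _ ≤ 2 / ((1 + s) * (((n:ℝ) + 1) ^ s)) := h2
      _ = 2 / (1 + s) * ((((n:ℝ) + 1) ^ s)⁻¹) := by rw [← div_div, div_eq_mul_inv]
  calc (θ:ℝ) ^ s * (((n:ℝ) + s) ^ s)⁻¹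
      ≤ ((θ:ℝ) + s) ^ s * (((n:ℝ) + s) ^ s)⁻¹ :=
        mul_le_mul_of_nonneg_right key1 (by positivity)
    _ ≤ ((θ:ℝ) + s) ^ s * (2 / (1 + s) * ((((n:ℝ) + 1) ^ s)⁻¹)) :=
        mul_le_mul_of_nonneg_left hstep (by positivity)
    _ = 2 / (1 + s) * (((θ:ℝ) + s) ^ s / ((n:ℝ) + 1) ^ s) := by
        rw [div_eq_mul_inv (((θ:ℝ) + s) ^ s)]; ring
end

section
/- Let α > 1 be real and let m, d be integers with 1 ≤ m ≤ d. Then Σ_{i=1}^{d} ((min(i, m) + 1/α) / max(i − m + 1, 1))^{1/α} ≤ (m + 1/α)^{1/α} · ( m + (α/(α−1)) · (d − m + 1)^{1 − 1/α} ). -/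
theorem stmt13 (α : ℝ) (hα : 1 < α) (m d : ℕ) (hm : 1 ≤ m) (hmd : m ≤ d) :
    ∑ i ∈ Finset.Icc 1 d,
        ((((min i m : ℕ) : ℝ) + 1/α) / max ((i : ℝ) - m + 1) 1) ^ (1/α) ≤
      ((m : ℝ) + 1/α) ^ (1/α) *
        ((m : ℝ) + α / (α - 1) * ((d : ℝ) - m + 1) ^ (1 - 1/α)) := by
  have hα0 : (0:ℝ) < α := lt_trans one_pos hα
  have hα1 : (0:ℝ) < α - 1 := by linarith
  set β : ℝ := 1/α with hβ
  have hβ0 : 0 < β := by positivity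
  have hβ1 : β < 1 := by rw [hβ, div_lt_one hα0]; exact hα
  set C : ℝ := ((m : ℝ) + β) ^ β with hC
  have hmβ : (0:ℝ) < (m:ℝ) + β := by positivity
  have hC0 : 0 ≤ C := Real.rpow_nonneg hmβ.le _
  -- key Bernoulli-type bound
  have key : ∀ x : ℝ, 2 ≤ x → 1 / x ^ β ≤ α/(α-1) * (x ^ (1-β) - (x-1) ^ (1-β)) := by
    intro x hx
    have hx0 : (0:ℝ) < x := by linarith
    have hinv : 1/x ≤ 1 := by rw [div_le_one hx0]; linarith
    have hinv0 : (0:ℝ) < 1/x := by positivity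
    have hb : (1 + (-(1/x))) ^ (1-β) ≤ 1 + (1-β) * (-(1/x)) := by
      apply rpow_one_add_le_one_add_mul_self
      · linarith
      · linarith
      · linarith
    have hfact : (x - 1) ^ (1-β) = x ^ (1-β) * (1 + (-(1/x))) ^ (1-β) := by
      rw [← Real.mul_rpow hx0.le (by linarith)]
      congr 1
      field_simp
      ring
    have hxp : x ^ (1-β) * (1/x) = x ^ (-β) := by
      have hxβ : (0:ℝ) < x ^ β := Real.rpow_pos_of_pos hx0 β
      rw [mul_one_div, Real.rpow_sub hx0, Real.rpow_neg hx0.le, Real.rpow_one]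
      field_simp
    have h1 : (x - 1) ^ (1-β) ≤ x ^ (1-β) - (1-β) * x ^ (-β) := by
      calc (x - 1) ^ (1-β) = x ^ (1-β) * (1 + (-(1/x))) ^ (1-β) := hfact
        _ ≤ x ^ (1-β) * (1 + (1-β) * (-(1/x))) :=
            mul_le_mul_of_nonneg_left hb (Real.rpow_nonneg hx0.le _)
        _ = x ^ (1-β) - (1-β) * (x ^ (1-β) * (1/x)) := by ring
        _ = x ^ (1-β) - (1-β) * x ^ (-β) := by rw [hxp]
    have h2 : (1-β) * x ^ (-β) ≤ x ^ (1-β) - (x-1) ^ (1-β) := by linarith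
    have hcoef : α/(α-1) * (1-β) = 1 := by rw [hβ]; field_simp
    have hxr : x ^ (-β) = 1 / x ^ β := by rw [Real.rpow_neg hx0.le, one_div]
    calc 1 / x ^ β = α/(α-1) * ((1-β) * x ^ (-β)) := by
          rw [← mul_assoc, hcoef, one_mul, hxr]
      _ ≤ α/(α-1) * (x ^ (1-β) - (x-1) ^ (1-β)) :=
          mul_le_mul_of_nonneg_left h2 (by positivity)
  -- split the sum
  have hId : Finset.Icc 1 d = Finset.Ioc 0 d := by ext i; simp; omega
  have hsplit : (∑ i ∈ Finset.Ioc 0 m,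
        ((((min i m : ℕ) : ℝ) + 1/α) / max ((i : ℝ) - m + 1) 1) ^ (1/α)) +
      (∑ i ∈ Finset.Ioc m d,
        ((((min i m : ℕ) : ℝ) + 1/α) / max ((i : ℝ) - m + 1) 1) ^ (1/α)) =
      ∑ i ∈ Finset.Icc 1 d,
        ((((min i m : ℕ) : ℝ) + 1/α) / max ((i : ℝ) - m + 1) 1) ^ (1/α) := by
    rw [hId]
    exact Finset.sum_Ioc_consecutive _ (Nat.zero_le m) hmd
  rw [← hsplit]
  -- Part 1
  have part1 : (∑ i ∈ Finset.Ioc 0 m,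
        ((((min i m : ℕ) : ℝ) + 1/α) / max ((i : ℝ) - m + 1) 1) ^ (1/α)) ≤ (m:ℝ) * C := by
    have hcard : (Finset.Ioc 0 m).card = m := by simp
    calc (∑ i ∈ Finset.Ioc 0 m,
          ((((min i m : ℕ) : ℝ) + 1/α) / max ((i : ℝ) - m + 1) 1) ^ (1/α))
        ≤ ∑ i ∈ Finset.Ioc 0 m, C := by
          apply Finset.sum_le_sum
          intro i hi
          simp only [Finset.mem_Ioc] at hi
          have hile : (i:ℝ) ≤ (m:ℝ) := Nat.cast_le.2 hi.2
          have hmin : min i m = i := min_eq_left hi.2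
          have hmax : max ((i : ℝ) - m + 1) 1 = 1 := max_eq_right (by linarith)
          rw [hmin, hmax, div_one]
          exact Real.rpow_le_rpow (by positivity) (by linarith) hβ0.le
      _ = (m:ℝ) * C := by rw [Finset.sum_const, hcard, nsmul_eq_mul]
  -- Part 2
  set N := d - m with hN
  have hcast : ((d:ℝ) - m + 1) = (N:ℝ) + 1 := by
    rw [hN, Nat.cast_sub hmd]
  have tele : ∀ n : ℕ, (∑ k ∈ Finset.range n,
        α/(α-1) * (((k:ℝ)+2) ^ (1-β) - ((k:ℝ)+1) ^ (1-β)))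
      = α/(α-1) * (((n:ℝ)+1) ^ (1-β) - 1) := by
    intro n
    induction n with
    | zero => norm_num
    | succ n ih =>
        rw [Finset.sum_range_succ, ih]
        push_cast
        rw [show ((n:ℝ)+1+1) = (n:ℝ)+2 by ring]
        ring
  have part2 : (∑ i ∈ Finset.Ioc m d,
        ((((min i m : ℕ) : ℝ) + 1/α) / max ((i : ℝ) - m + 1) 1) ^ (1/α)) ≤
      C * (α/(α-1) * (((N:ℝ)+1) ^ (1-β) - 1)) := by
    have hIoc : Finset.Ioc m d = Finset.Ico (m+1) (d+1) := by ext i; simp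
    rw [hIoc, Finset.sum_Ico_eq_sum_range, show d + 1 - (m+1) = N by omega]
    have hterm : ∀ k ∈ Finset.range N,
        ((((min (m+1+k) m : ℕ) : ℝ) + 1/α) / max (((m+1+k : ℕ) : ℝ) - m + 1) 1) ^ (1/α)
          ≤ C * (α/(α-1) * (((k:ℝ)+2) ^ (1-β) - ((k:ℝ)+1) ^ (1-β))) := by
      intro k _
      have hk0 : (0:ℝ) ≤ (k:ℝ) := Nat.cast_nonneg k
      have hmin : min (m+1+k) m = m := min_eq_right (by omega)
      have hxval : (((m+1+k : ℕ) : ℝ) - m + 1) = (k:ℝ) + 2 := by push_cast; ring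
      have hx2 : (2:ℝ) ≤ (k:ℝ) + 2 := by linarith
      have hmax : max (((m+1+k : ℕ) : ℝ) - m + 1) 1 = (k:ℝ) + 2 := by
        rw [hxval]; exact max_eq_left (by linarith)
      rw [hmin, hmax]
      have hdiv : (((m:ℝ) + 1/α) / ((k:ℝ) + 2)) ^ (1/α)
          = C * (1 / ((k:ℝ)+2) ^ β) := by
        rw [Real.div_rpow hmβ.le (by linarith), hC, hβ, mul_one_div]
      rw [hdiv]
      apply mul_le_mul_of_nonneg_left _ hC0
      have hkey := key ((k:ℝ)+2) hx2
      rw [show ((k:ℝ)+2) - 1 = (k:ℝ)+1 by ring] at hkey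
      exact hkey
    calc (∑ k ∈ Finset.range N,
          ((((min (m+1+k) m : ℕ) : ℝ) + 1/α) / max (((m+1+k : ℕ) : ℝ) - m + 1) 1) ^ (1/α))
        ≤ ∑ k ∈ Finset.range N,
            C * (α/(α-1) * (((k:ℝ)+2) ^ (1-β) - ((k:ℝ)+1) ^ (1-β))) :=
          Finset.sum_le_sum hterm
      _ = C * (α/(α-1) * (((N:ℝ)+1) ^ (1-β) - 1)) := by
          rw [← Finset.mul_sum, tele N]
  -- combine
  have hfinal : (m:ℝ) * C + C * (α/(α-1) * (((N:ℝ)+1) ^ (1-β) - 1))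
      ≤ C * ((m : ℝ) + α / (α - 1) * ((d : ℝ) - m + 1) ^ (1 - β)) := by
    rw [hcast]
    have hCA : (0:ℝ) ≤ C * (α/(α-1)) := by positivity
    nlinarith [hC0]
  calc _ ≤ (m:ℝ) * C + C * (α/(α-1) * (((N:ℝ)+1) ^ (1-β) - 1)) :=
        add_le_add part1 part2
    _ ≤ C * ((m : ℝ) + α / (α - 1) * ((d : ℝ) - m + 1) ^ (1 - β)) := hfinal
    _ = ((m : ℝ) + 1/α) ^ (1/α) * ((m : ℝ) + α / (α - 1) * ((d : ℝ) - m + 1) ^ (1 - 1/α)) := by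
        rw [hC, hβ]
end

section
/- Let α > 1 be real and let m, d be integers with 1 ≤ m ≤ d. Then Σ_{i=1}^{d} ((min(i, m) + 1/α) / i)^{1/α} ≤ (α/(α−1)) · (m + 1/α)^{1/α} · d^{1 − 1/α}. -/
open Real Finset

lemma key14 {s : ℝ} (hs0 : 0 < s) (hs1 : s < 1) (k : ℕ) :
    (1 - s) * ((k : ℝ) + 1) ^ (-s) ≤ ((k : ℝ) + 1) ^ (1 - s) - (k : ℝ) ^ (1 - s) := by
  set x : ℝ := (k : ℝ) + 1 with hxdef
  have hx1 : (1 : ℝ) ≤ x := by simp [hxdef]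
  have hx : (0 : ℝ) < x := lt_of_lt_of_le one_pos hx1
  have hk : (k : ℝ) = x * (1 + (-1 / x)) := by
    have : x ≠ 0 := hx.ne'
    field_simp
    ring
  have hb : (1 + (-1 / x)) ^ (1 - s) ≤ 1 + (1 - s) * (-1 / x) := by
    apply rpow_one_add_le_one_add_mul_self _ (by linarith) (by linarith)
    rw [neg_div, neg_le_neg_iff]
    exact div_le_one_of_le₀ hx1 hx.le
  have hnn : (0 : ℝ) ≤ 1 + (-1 / x) := by
    rw [neg_div, ← sub_eq_add_neg, sub_nonneg]
    exact div_le_one_of_le₀ hx1 hx.le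
  have hmain : (k : ℝ) ^ (1 - s) ≤ x ^ (1 - s) - (1 - s) * x ^ (-s) := by
    calc (k : ℝ) ^ (1 - s) = x ^ (1 - s) * (1 + (-1 / x)) ^ (1 - s) := by
          rw [hk, Real.mul_rpow hx.le hnn]
      _ ≤ x ^ (1 - s) * (1 + (1 - s) * (-1 / x)) := by
          exact mul_le_mul_of_nonneg_left hb (Real.rpow_nonneg hx.le _)
      _ = x ^ (1 - s) - (1 - s) * (x ^ (1 - s) / x) := by ring
      _ = x ^ (1 - s) - (1 - s) * x ^ (-s) := by
          rw [← Real.rpow_sub_one hx.ne']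
          ring_nf
  linarith

lemma sum14 {s : ℝ} (hs0 : 0 < s) (hs1 : s < 1) (d : ℕ) :
    ∑ i ∈ Finset.Icc 1 d, (i : ℝ) ^ (-s) ≤ (d : ℝ) ^ (1 - s) / (1 - s) := by
  have h1s : (0 : ℝ) < 1 - s := by linarith
  rw [le_div_iff₀ h1s, mul_comm]
  have hrw : ∑ i ∈ Finset.Icc 1 d, (i : ℝ) ^ (-s)
      = ∑ k ∈ Finset.range d, ((k : ℝ) + 1) ^ (-s) := by
    rw [← Finset.Ico_add_one_right_eq_Icc, Finset.sum_Ico_eq_sum_range]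
    simp [add_comm]
  rw [hrw, Finset.mul_sum]
  calc ∑ k ∈ Finset.range d, (1 - s) * ((k : ℝ) + 1) ^ (-s)
      ≤ ∑ k ∈ Finset.range d, (((k : ℝ) + 1) ^ (1 - s) - (k : ℝ) ^ (1 - s)) :=
        Finset.sum_le_sum fun k _ => key14 hs0 hs1 k
    _ = (d : ℝ) ^ (1 - s) - (0 : ℝ) ^ (1 - s) := by
        have := Finset.sum_range_sub (fun k : ℕ => (k : ℝ) ^ (1 - s)) d
        simpa using this
    _ = (d : ℝ) ^ (1 - s) := by rw [Real.zero_rpow h1s.ne']; ring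

theorem stmt14 (α : ℝ) (hα : 1 < α) (m d : ℕ) (hm : 1 ≤ m) (hmd : m ≤ d) :
    ∑ i ∈ Finset.Icc 1 d, ((((min i m : ℕ) : ℝ) + 1/α) / (i : ℝ)) ^ (1/α) ≤
      α / (α - 1) * ((m : ℝ) + 1/α) ^ (1/α) * (d : ℝ) ^ (1 - 1/α) := by
  have hα0 : (0 : ℝ) < α := by linarith
  set s : ℝ := 1 / α with hsdef
  have hs0 : 0 < s := by positivity
  have hs1 : s < 1 := by rw [hsdef]; rw [div_lt_one hα0]; linarith
  have hC : (0 : ℝ) ≤ (m : ℝ) + 1/α := by positivity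
  have step1 : ∀ i ∈ Finset.Icc 1 d,
      ((((min i m : ℕ) : ℝ) + 1/α) / (i : ℝ)) ^ (1/α)
        ≤ ((m : ℝ) + 1/α) ^ (1/α) * (i : ℝ) ^ (-s) := by
    intro i hi
    have hi1 : 1 ≤ i := (Finset.mem_Icc.mp hi).1
    have hipos : (0 : ℝ) < (i : ℝ) := by exact_mod_cast hi1
    have h1 : ((((min i m : ℕ) : ℝ) + 1/α) / (i : ℝ)) ^ (1/α)
        ≤ (((m : ℝ) + 1/α) / (i : ℝ)) ^ (1/α) := by
      apply Real.rpow_le_rpow (by positivity) ?_ (by positivity)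
      gcongr
      exact_mod_cast min_le_right i m
    calc ((((min i m : ℕ) : ℝ) + 1/α) / (i : ℝ)) ^ (1/α)
        ≤ (((m : ℝ) + 1/α) / (i : ℝ)) ^ (1/α) := h1
      _ = ((m : ℝ) + 1/α) ^ (1/α) * (i : ℝ) ^ (-s) := by
          rw [Real.div_rpow hC hipos.le, Real.rpow_neg hipos.le, div_eq_mul_inv, hsdef]
  calc ∑ i ∈ Finset.Icc 1 d, ((((min i m : ℕ) : ℝ) + 1/α) / (i : ℝ)) ^ (1/α)
      ≤ ∑ i ∈ Finset.Icc 1 d, ((m : ℝ) + 1/α) ^ (1/α) * (i : ℝ) ^ (-s) :=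
        Finset.sum_le_sum step1
    _ = ((m : ℝ) + 1/α) ^ (1/α) * ∑ i ∈ Finset.Icc 1 d, (i : ℝ) ^ (-s) := by
        rw [Finset.mul_sum]
    _ ≤ ((m : ℝ) + 1/α) ^ (1/α) * ((d : ℝ) ^ (1 - s) / (1 - s)) := by
        apply mul_le_mul_of_nonneg_left (sum14 hs0 hs1 d) (Real.rpow_nonneg hC _)
    _ = α / (α - 1) * ((m : ℝ) + 1/α) ^ (1/α) * (d : ℝ) ^ (1 - 1/α) := by
        rw [hsdef]
        have hα1 : α - 1 ≠ 0 := by intro h; linarith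
        field_simp
end

section
/- Let α > 1 be real and let m, d be integers with 1 ≤ m ≤ d. Then Σ_{k=1}^{m} [Γ(d+1) · Γ(d − k + 1 − 1/α)] / [Γ(d − k + 1) · Γ(d + 1 − 1/α)] ≤ ( (α/(α−1)) · m^{1 − 1/α} + Γ(1 − 1/α) ) · (d + 1)^{1/α}, where Γ denotes the Gamma function. -/
open Real Finset

lemma gamma_combo {a b w : ℝ} (ha : 0 < a) (hb : 0 < b) (hw0 : 0 ≤ w) (hw1 : w ≤ 1) :
    Real.Gamma ((1-w)*a + w*b) ≤ Real.Gamma a ^ (1-w) * Real.Gamma b ^ w := by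
  have hc : 0 < (1-w)*a + w*b := by
    rcases eq_or_lt_of_le hw0 with h|h
    · simp [← h, ha]
    · nlinarith
  have h := Real.convexOn_log_Gamma.2 (Set.mem_Ioi.2 ha) (Set.mem_Ioi.2 hb)
    (by linarith : (0:ℝ) ≤ 1-w) hw0 (by ring)
  have hga := Real.Gamma_pos_of_pos ha
  have hgb := Real.Gamma_pos_of_pos hb
  have hgc := Real.Gamma_pos_of_pos hc
  calc Real.Gamma ((1-w)*a + w*b) = Real.exp (Real.log (Real.Gamma ((1-w)*a + w*b))) :=
        (Real.exp_log hgc).symm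
    _ ≤ Real.exp ((1-w)*Real.log (Real.Gamma a) + w * Real.log (Real.Gamma b)) := by
        apply Real.exp_le_exp.2
        simpa [smul_eq_mul, Function.comp] using h
    _ = Real.Gamma a ^ (1-w) * Real.Gamma b ^ w := by
        rw [Real.exp_add, Real.rpow_def_of_pos hga, Real.rpow_def_of_pos hgb,
          mul_comm (1-w), mul_comm w]
lemma gammaUpper {y β : ℝ} (hy : 0 < y) (hβ0 : 0 ≤ β) (hβ1 : β < 1) :
    Real.Gamma (y+1) ≤ (y+1) ^ β * Real.Gamma (y+1-β) := by
  have ha : 0 < y+1-β := by linarith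
  have hb : 0 < y+2-β := by linarith
  have h := gamma_combo ha hb hβ0 hβ1.le
  have hcomb : (1-β)*(y+1-β) + β*(y+2-β) = y+1 := by ring
  rw [hcomb] at h
  have he : y+2-β = (y+1-β) + 1 := by ring
  rw [he, Real.Gamma_add_one (ne_of_gt ha)] at h
  have hga := Real.Gamma_pos_of_pos ha
  calc Real.Gamma (y+1) ≤ Real.Gamma (y+1-β) ^ (1-β) * ((y+1-β) * Real.Gamma (y+1-β)) ^ β := h
    _ = (y+1-β)^β * Real.Gamma (y+1-β) := by
        rw [Real.mul_rpow ha.le hga.le, mul_left_comm, ← Real.rpow_add hga]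
        have h1 : (1:ℝ)-β+β = 1 := by ring
        rw [h1, Real.rpow_one]
    _ ≤ (y+1)^β * Real.Gamma (y+1-β) := by
        have : (y+1-β)^β ≤ (y+1)^β := Real.rpow_le_rpow ha.le (by linarith) hβ0
        exact mul_le_mul_of_nonneg_right this hga.le

lemma gammaLower {y β : ℝ} (hy : 0 < y) (hβ0 : 0 ≤ β) (hβ1 : β < 1) :
    Real.Gamma (y+1-β) ≤ y ^ (-β) * Real.Gamma (y+1) := by
  have hy1 : 0 < y+1 := by linarith
  have h := gamma_combo hy1 hy hβ0 hβ1.le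
  have hcomb : (1-β)*(y+1) + β*y = y+1-β := by ring
  rw [hcomb] at h
  have hgy : Real.Gamma y = Real.Gamma (y+1) / y := by
    rw [Real.Gamma_add_one (ne_of_gt hy)]
    field_simp
  rw [hgy] at h
  have hg1 := Real.Gamma_pos_of_pos hy1
  calc Real.Gamma (y+1-β) ≤ Real.Gamma (y+1) ^ (1-β) * (Real.Gamma (y+1) / y) ^ β := h
    _ = y ^ (-β) * Real.Gamma (y+1) := by
        rw [Real.div_rpow hg1.le hy.le, mul_div_assoc', ← Real.rpow_add hg1]
        have h1 : (1:ℝ)-β+β = 1 := by ring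
        rw [h1, Real.rpow_one, Real.rpow_neg hy.le]
        ring
lemma Tsum {β : ℝ} (hβ0 : 0 < β) (hβ1 : β < 1) (m : ℕ) :
    ∑ j ∈ Finset.Icc 1 m, (j:ℝ)^(-β) ≤ (m:ℝ)^(1-β)/(1-β) := by
  have hp0 : 0 < 1-β := by linarith
  induction m with
  | zero => simp [Real.zero_rpow (ne_of_gt hp0)]
  | succ m ih =>
    rw [Finset.sum_Icc_succ_top (by omega : 1 ≤ m+1)]
    have hM : (0:ℝ) < (m:ℝ)+1 := by positivity
    have key : (1-β) * ((m:ℝ)+1)^(-β) ≤ ((m:ℝ)+1)^(1-β) - (m:ℝ)^(1-β) := by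
      have hs : -1 ≤ -1/((m:ℝ)+1) := by
        rw [neg_div, neg_le_neg_iff]
        apply div_le_one_of_le₀ <;> linarith
      have hb := rpow_one_add_le_one_add_mul_self hs hp0.le (by linarith : 1-β ≤ 1)
      have he : (1:ℝ) + (-1/((m:ℝ)+1)) = (m:ℝ)/((m:ℝ)+1) := by field_simp; ring
      rw [he] at hb
      have hmp : (m:ℝ)^(1-β) = ((m:ℝ)+1)^(1-β) * ((m:ℝ)/((m:ℝ)+1))^(1-β) := by
        rw [← Real.mul_rpow hM.le (by positivity)]
        congr 1
        field_simp
      have h2 : ((m:ℝ)+1)^(1-β) * ((m:ℝ)+1)⁻¹ = ((m:ℝ)+1)^(-β) := by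
        rw [← Real.rpow_neg_one ((m:ℝ)+1), ← Real.rpow_add hM]
        congr 1; ring
      have h3 : (m:ℝ)^(1-β) ≤ ((m:ℝ)+1)^(1-β) * (1 + (1-β) * (-1/((m:ℝ)+1))) := by
        rw [hmp]
        exact mul_le_mul_of_nonneg_left hb (by positivity)
      have h4 : ((m:ℝ)+1)^(1-β) * (1 + (1-β) * (-1/((m:ℝ)+1)))
          = ((m:ℝ)+1)^(1-β) - (1-β) * (((m:ℝ)+1)^(1-β) * ((m:ℝ)+1)⁻¹) := by
        field_simp; ring
      rw [h4, h2] at h3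
      linarith
    have : ((m:ℝ)+1)^(-β) ≤ (((m:ℝ)+1)^(1-β) - (m:ℝ)^(1-β))/(1-β) := by
      rw [le_div_iff₀ hp0]
      linarith [key]
    push_cast
    calc (∑ j ∈ Finset.Icc 1 m, (j:ℝ)^(-β)) + ((m:ℝ)+1)^(-β)
        ≤ (m:ℝ)^(1-β)/(1-β) + (((m:ℝ)+1)^(1-β) - (m:ℝ)^(1-β))/(1-β) := by
          exact add_le_add ih this
      _ = ((m:ℝ)+1)^(1-β)/(1-β) := by ring

lemma reflectIcc (f : ℕ → ℝ) (b : ℕ) :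
    ∑ k ∈ Finset.Icc 1 b, f (b+1-k) = ∑ j ∈ Finset.Icc 1 b, f j := by
  refine Finset.sum_nbij' (fun k => b+1-k) (fun k => b+1-k) ?_ ?_ ?_ ?_ ?_ <;>
    simp only [Finset.mem_Icc] <;> intro a ha <;> first | trivial | omega
theorem stmt15 (α : ℝ) (hα : 1 < α) (m d : ℕ) (hm : 1 ≤ m) (hmd : m ≤ d) :
    ∑ k ∈ Finset.Icc 1 m,
        Real.Gamma ((d : ℝ) + 1) * Real.Gamma ((d : ℝ) - k + 1 - 1/α) /
          (Real.Gamma ((d : ℝ) - k + 1) * Real.Gamma ((d : ℝ) + 1 - 1/α)) ≤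
      (α / (α - 1) * (m : ℝ) ^ (1 - 1/α) + Real.Gamma (1 - 1/α)) * ((d : ℝ) + 1) ^ (1/α) := by
  have hα0 : 0 < α := by linarith
  set β := 1/α with hβ
  have hβ0 : 0 < β := by positivity
  have hβ1 : β < 1 := by rw [hβ]; exact (div_lt_one hα0).2 hα
  have hd1 : (0:ℝ) < (d:ℝ)+1 := by positivity
  have hdpos : (0:ℝ) < (d:ℝ) := by
    have : 0 < d := by omega
    exact_mod_cast this
  have hGU := gammaUpper hdpos hβ0.le hβ1
  have hGdb : 0 < Real.Gamma ((d:ℝ)+1-β) := Real.Gamma_pos_of_pos (by linarith)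
  have hΓpos : 0 < Real.Gamma (1-β) := Real.Gamma_pos_of_pos (by linarith)
  set c : ℕ → ℝ := fun k => if k = d then Real.Gamma (1-β) else ((d:ℝ)-k)^(-β) with hc
  have step1 : ∑ k ∈ Finset.Icc 1 m,
        Real.Gamma ((d : ℝ) + 1) * Real.Gamma ((d : ℝ) - k + 1 - β) /
          (Real.Gamma ((d : ℝ) - k + 1) * Real.Gamma ((d : ℝ) + 1 - β))
      ≤ ∑ k ∈ Finset.Icc 1 m, ((d:ℝ)+1)^β * c k := by
    apply Finset.sum_le_sum
    intro k hk
    rw [Finset.mem_Icc] at hk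
    have hkd : k ≤ d := le_trans hk.2 hmd
    by_cases hkd' : k = d
    · subst hkd'
      have hcd : c k = Real.Gamma (1-β) := by simp [hc]
      rw [hcd, sub_self, zero_add, Real.Gamma_one, one_mul, div_le_iff₀ hGdb]
      nlinarith [mul_le_mul_of_nonneg_right hGU hΓpos.le]
    · have hkdlt : k < d := lt_of_le_of_ne hkd hkd'
      set y : ℝ := (d:ℝ) - k with hy
      have hy0 : 0 < y := by
        rw [hy]
        have : (k:ℝ) < d := by exact_mod_cast hkdlt
        linarith
      have hGL := gammaLower hy0 hβ0.le hβ1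
      have hGy1 : 0 < Real.Gamma (y+1) := Real.Gamma_pos_of_pos (by linarith)
      have hGyb : 0 < Real.Gamma (y+1-β) := Real.Gamma_pos_of_pos (by linarith)
      rw [hc]
      simp only [if_neg hkd']
      rw [div_le_iff₀ (by positivity)]
      have hmm := mul_le_mul hGU hGL hGyb.le (by positivity)
      calc Real.Gamma ((d:ℝ)+1) * Real.Gamma (y+1-β)
          ≤ ((d:ℝ)+1)^β * Real.Gamma ((d:ℝ)+1-β) * (y^(-β) * Real.Gamma (y+1)) := hmm
        _ = ((d:ℝ)+1)^β * y^(-β) * (Real.Gamma (y+1) * Real.Gamma ((d:ℝ)+1-β)) := by ring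
  have p_pos : 0 < 1-β := by linarith
  have step2 : ∑ k ∈ Finset.Icc 1 m, c k ≤ (m:ℝ)^(1-β)/(1-β) + Real.Gamma (1-β) := by
    rcases eq_or_lt_of_le hmd with heq | hlt
    · subst heq
      obtain ⟨n, rfl⟩ : ∃ n, m = n+1 := ⟨m-1, by omega⟩
      rw [Finset.sum_Icc_succ_top (by omega : 1 ≤ n+1)]
      have hcend : c (n+1) = Real.Gamma (1-β) := by rw [hc]; simp
      have hbody : ∑ k ∈ Finset.Icc 1 n, c k ≤ (((n:ℝ)+1))^(1-β)/(1-β) := by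
        have hre : ∑ k ∈ Finset.Icc 1 n, c k
            = ∑ k ∈ Finset.Icc 1 n, (((n+1-k : ℕ)):ℝ)^(-β) := by
          apply Finset.sum_congr rfl
          intro k hk
          rw [Finset.mem_Icc] at hk
          rw [hc]
          simp only [if_neg (by omega : ¬ k = n+1)]
          congr 1
          push_cast [Nat.cast_sub (by omega : k ≤ n+1)]
          ring
        rw [hre, reflectIcc (fun j => (j:ℝ)^(-β)) n]
        calc ∑ j ∈ Finset.Icc 1 n, (j:ℝ)^(-β) ≤ (n:ℝ)^(1-β)/(1-β) := Tsum hβ0 hβ1 n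
          _ ≤ ((n:ℝ)+1)^(1-β)/(1-β) := by
              have hle : (n:ℝ)^(1-β) ≤ ((n:ℝ)+1)^(1-β) :=
                Real.rpow_le_rpow (Nat.cast_nonneg n) (by linarith) p_pos.le
              gcongr
      rw [hcend]
      push_cast
      push_cast at hbody
      linarith [hbody]
    · have hbound : ∀ k ∈ Finset.Icc 1 m, c k ≤ (((m+1-k : ℕ)):ℝ)^(-β) := by
        intro k hk
        rw [Finset.mem_Icc] at hk
        rw [hc]
        simp only [if_neg (by omega : ¬ k = d)]
        apply Real.rpow_le_rpow_of_nonpos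
        · have : (0:ℝ) < ((m+1-k : ℕ):ℝ) := by
            have : 0 < m+1-k := by omega
            exact_mod_cast this
          exact this
        · push_cast [Nat.cast_sub (by omega : k ≤ m+1)]
          have : (m:ℝ) + 1 ≤ (d:ℝ) := by exact_mod_cast Nat.succ_le_of_lt hlt
          have hk' : (k:ℝ) ≤ (m:ℝ) := by exact_mod_cast hk.2
          linarith
        · linarith
      calc ∑ k ∈ Finset.Icc 1 m, c k ≤ ∑ k ∈ Finset.Icc 1 m, (((m+1-k : ℕ)):ℝ)^(-β) :=
            Finset.sum_le_sum hbound
        _ = ∑ j ∈ Finset.Icc 1 m, (j:ℝ)^(-β) := reflectIcc (fun j => (j:ℝ)^(-β)) m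
        _ ≤ (m:ℝ)^(1-β)/(1-β) := Tsum hβ0 hβ1 m
        _ ≤ (m:ℝ)^(1-β)/(1-β) + Real.Gamma (1-β) := by linarith
  have hfin : ((m:ℝ)^(1-β)/(1-β) + Real.Gamma (1-β))
      = α/(α-1) * (m:ℝ)^(1-β) + Real.Gamma (1-β) := by
    have : (1:ℝ)/(1-β) = α/(α-1) := by
      rw [hβ]
      field_simp
    rw [div_eq_mul_one_div, mul_comm ((m:ℝ)^(1-β)), this]
  calc ∑ k ∈ Finset.Icc 1 m,
        Real.Gamma ((d : ℝ) + 1) * Real.Gamma ((d : ℝ) - k + 1 - β) /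
          (Real.Gamma ((d : ℝ) - k + 1) * Real.Gamma ((d : ℝ) + 1 - β))
      ≤ ∑ k ∈ Finset.Icc 1 m, ((d:ℝ)+1)^β * c k := step1
    _ = ((d:ℝ)+1)^β * ∑ k ∈ Finset.Icc 1 m, c k := by rw [Finset.mul_sum]
    _ ≤ ((d:ℝ)+1)^β * ((m:ℝ)^(1-β)/(1-β) + Real.Gamma (1-β)) := by
        apply mul_le_mul_of_nonneg_left step2 (by positivity)
    _ = (α / (α - 1) * (m : ℝ) ^ (1 - β) + Real.Gamma (1 - β)) * ((d : ℝ) + 1) ^ β := by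
        rw [hfin]; ring
end

section
/- Let μ and ν be Borel probability measures on ℝ with cumulative distribution functions F(t) = μ((−∞, t]) and G(t) = ν((−∞, t]) satisfying G(t) ≥ F(t) for all t ∈ ℝ. Fix integers 1 ≤ k ≤ n and let s_k : ℝ^n → ℝ map x to its k-th largest coordinate. If s_k is integrable with respect to both product measures μ^{⊗n} and ν^{⊗n}, then ∫ s_k dν^{⊗n} ≤ ∫ s_k dμ^{⊗n}. -/
open MeasureTheory Set

/-- The `k`-th largest coordinate of `x : Fin n → ℝ` (1-indexed): the `k`-th entry of the
coordinates of `x` sorted in descending order. -/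
noncomputable def kthLargest (n k : ℕ) (x : Fin n → ℝ) : ℝ :=
  ((List.ofFn x).insertionSort (· ≥ ·)).getD (k - 1) 0


lemma fa_insert_right {s s' : List ℝ} {a : ℝ} (h : List.Forall₂ (· ≤ ·) s s') :
    ∀ {c : ℝ}, a ≤ c → List.Pairwise (· ≥ ·) (c :: s') →
      List.Forall₂ (· ≤ ·) (List.orderedInsert (· ≥ ·) a s) (c :: s') := by
  induction h with
  | nil => exact fun hac _ => List.Forall₂.cons hac List.Forall₂.nil
  | @cons b d t t' hbd h ih =>
    intro c hac hsort
    rw [List.orderedInsert]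
    split
    · exact List.Forall₂.cons hac (List.Forall₂.cons hbd h)
    · rename_i hab
      have hcd : d ≤ c := (List.pairwise_cons.1 hsort).1 _ (List.mem_cons_self)
      have hsort' : List.Pairwise (· ≥ ·) (d :: t') := (List.pairwise_cons.1 hsort).2
      have had : a ≤ d := le_trans (lt_of_not_ge hab).le hbd
      exact List.Forall₂.cons (le_trans hbd hcd) (ih had hsort')

lemma fa_insert_left {s s' : List ℝ} (h : List.Forall₂ (· ≤ ·) s s') :
    ∀ {b c : ℝ}, b ≤ c → List.Pairwise (· ≥ ·) (b :: s) →
      List.Forall₂ (· ≤ ·) (b :: s) (List.orderedInsert (· ≥ ·) c s') := by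
  induction h with
  | nil => exact fun hbc _ => List.Forall₂.cons hbc List.Forall₂.nil
  | @cons d d' t t' hdd' h ih =>
    intro b c hbc hsort
    rw [List.orderedInsert]
    split
    · exact List.Forall₂.cons hbc (List.Forall₂.cons hdd' h)
    · rename_i hcd'
      have hdb : d ≤ b := (List.pairwise_cons.1 hsort).1 _ (List.mem_cons_self)
      have hsort' : List.Pairwise (· ≥ ·) (d :: t) := (List.pairwise_cons.1 hsort).2
      exact List.Forall₂.cons (le_trans hbc (lt_of_not_ge hcd').le)
        (ih (le_trans hdb hbc) hsort')

lemma fa_orderedInsert {s s' : List ℝ} {a a' : ℝ} (haa' : a ≤ a')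
    (h : List.Forall₂ (· ≤ ·) s s') (hs : List.Pairwise (· ≥ ·) s)
    (hs' : List.Pairwise (· ≥ ·) s') :
    List.Forall₂ (· ≤ ·) (List.orderedInsert (· ≥ ·) a s)
      (List.orderedInsert (· ≥ ·) a' s') := by
  induction h with
  | nil => exact List.Forall₂.cons haa' List.Forall₂.nil
  | @cons b b' t t' hbb' h ih =>
    rw [List.orderedInsert, List.orderedInsert]
    split
    · split
      · exact List.Forall₂.cons haa' (List.Forall₂.cons hbb' h)
      · rename_i hab ha'b'
        exact List.Forall₂.cons (le_trans haa' (lt_of_not_ge ha'b').le)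
          (fa_insert_left h (le_trans hab haa') hs)
    · split
      · rename_i hab ha'b'
        exact List.Forall₂.cons (le_trans hbb' ha'b')
          (fa_insert_right h (le_trans (lt_of_not_ge hab).le hbb') hs')
      · exact List.Forall₂.cons hbb'
          (ih (List.pairwise_cons.1 hs).2 (List.pairwise_cons.1 hs').2)

lemma fa_insertionSort {l l' : List ℝ} (h : List.Forall₂ (· ≤ ·) l l') :
    List.Forall₂ (· ≤ ·) (List.insertionSort (· ≥ ·) l) (List.insertionSort (· ≥ ·) l') := by
  haveI : IsTotal ℝ (· ≥ ·) := ⟨fun a b => le_total b a⟩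
  haveI : IsTrans ℝ (· ≥ ·) := ⟨fun a b c h1 h2 => le_trans h2 h1⟩
  induction h with
  | nil => exact List.Forall₂.nil
  | @cons a a' t t' haa' h ih =>
    exact fa_orderedInsert haa' ih (List.pairwise_insertionSort _ _) (List.pairwise_insertionSort _ _)


lemma kth_mono {n k : ℕ} (hk1 : 1 ≤ k) (hkn : k ≤ n) {x y : Fin n → ℝ}
    (h : ∀ i, x i ≤ y i) : kthLargest n k x ≤ kthLargest n k y := by
  have hf : List.Forall₂ (· ≤ ·) (List.ofFn x) (List.ofFn y) := by
    rw [List.forall₂_iff_get]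
    refine ⟨by simp, fun i h1 h2 => ?_⟩
    simp only [List.get_ofFn]
    exact h _
  have hs := fa_insertionSort hf
  have hlen : (List.insertionSort (· ≥ ·) (List.ofFn x)).length = n := by simp
  have hlen' : (List.insertionSort (· ≥ ·) (List.ofFn y)).length = n := by simp
  have hk : k - 1 < n := by omega
  unfold kthLargest
  rw [List.getD_eq_getElem (l := List.insertionSort (· ≥ ·) (List.ofFn x)) (d := 0) (by omega : k - 1 < (List.insertionSort (· ≥ ·) (List.ofFn x)).length),
    List.getD_eq_getElem (l := List.insertionSort (· ≥ ·) (List.ofFn y)) (d := 0) (by omega : k - 1 < (List.insertionSort (· ≥ ·) (List.ofFn y)).length)]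
  exact (List.forall₂_iff_get.1 hs).2 _ _ _


noncomputable def ql (μ : Measure ℝ) (u : ℝ) : ℝ := sInf {t | u ≤ (μ (Iic t)).toReal}

lemma F_mono (μ : Measure ℝ) [IsProbabilityMeasure μ] :
    Monotone fun t => (μ (Iic t)).toReal := fun a b hab =>
  ENNReal.toReal_mono (measure_ne_top μ _) (measure_mono (Iic_subset_Iic.2 hab))

lemma ql_nonempty (μ : Measure ℝ) [IsProbabilityMeasure μ] {u : ℝ} (hu : u < 1) :
    {t | u ≤ (μ (Iic t)).toReal}.Nonempty := by
  have h := tendsto_measure_Iic_atTop μ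
  rw [measure_univ] at h
  have : ∀ᶠ t in Filter.atTop, ENNReal.ofReal u < μ (Iic t) :=
    h.eventually (eventually_gt_nhds (ENNReal.ofReal_lt_one.2 hu))
  obtain ⟨t, ht⟩ := this.exists
  exact ⟨t, (ENNReal.ofReal_le_iff_le_toReal (measure_ne_top μ _)).1 ht.le⟩

lemma ql_bddBelow (μ : Measure ℝ) [IsProbabilityMeasure μ] {u : ℝ} (hu : 0 < u) :
    BddBelow {t | u ≤ (μ (Iic t)).toReal} := by
  have hempty : ⋂ t : ℝ, Iic t = ∅ := by
    ext x
    simp only [mem_iInter, mem_Iic, mem_empty_iff_false, iff_false, not_forall, not_le]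
    exact ⟨x - 1, by linarith⟩
  have h : Filter.Tendsto (fun t : ℝ => μ (Iic t)) Filter.atBot (nhds 0) := by
    have := tendsto_measure_iInter_atBot (μ := μ) (s := fun t : ℝ => Iic t)
      (fun t => nullMeasurableSet_Iic) (fun a b hab => Iic_subset_Iic.2 hab)
      ⟨0, measure_ne_top μ _⟩
    rwa [hempty, measure_empty] at this
  have : ∀ᶠ t in Filter.atBot, μ (Iic t) < ENNReal.ofReal u :=
    h.eventually (eventually_lt_nhds (by simpa using hu))
  obtain ⟨t₀, ht₀⟩ := this.exists
  refine ⟨t₀, fun s hs => ?_⟩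
  by_contra hst
  push_neg at hst
  have h1 : (μ (Iic s)).toReal < u := by
    have := lt_of_le_of_lt (measure_mono (Iic_subset_Iic.2 hst.le)) ht₀
    rw [ENNReal.lt_ofReal_iff_toReal_lt (measure_ne_top μ _)] at this
    exact this
  exact absurd hs (not_le.2 h1)

lemma ql_le (μ : Measure ℝ) [IsProbabilityMeasure μ] {u t : ℝ} (hu : 0 < u)
    (h : u ≤ (μ (Iic t)).toReal) : ql μ u ≤ t := csInf_le (ql_bddBelow μ hu) h

lemma le_F_of_ql_le (μ : Measure ℝ) [IsProbabilityMeasure μ] {u t ε : ℝ} (hu1 : u < 1)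
    (h : ql μ u ≤ t) (hε : 0 < ε) : u ≤ (μ (Iic (t + ε))).toReal := by
  have hne := ql_nonempty μ hu1
  have : sInf {t | u ≤ (μ (Iic t)).toReal} < t + ε := lt_of_le_of_lt h (by linarith)
  obtain ⟨s, hs, hst⟩ := exists_lt_of_csInf_lt hne this
  exact le_trans hs (F_mono μ hst.le)

lemma ql_monotoneOn (μ : Measure ℝ) [IsProbabilityMeasure μ] :
    MonotoneOn (ql μ) (Ioo (0:ℝ) 1) := fun u hu v hv huv =>
  csInf_le_csInf (ql_bddBelow μ hu.1) (ql_nonempty μ hv.2)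
    (fun t ht => le_trans huv ht)

instance : IsProbabilityMeasure (volume.restrict (Ioo (0:ℝ) 1)) :=
  ⟨by rw [Measure.restrict_apply_univ, Real.volume_Ioo]; simp⟩

lemma map_ql (μ : Measure ℝ) [IsProbabilityMeasure μ]
    (hqm : AEMeasurable (ql μ) (volume.restrict (Ioo (0:ℝ) 1))) :
    Measure.map (ql μ) (volume.restrict (Ioo (0:ℝ) 1)) = μ := by
  haveI := Measure.isProbabilityMeasure_map hqm
  refine Measure.ext_of_Iic _ _ (fun t => ?_)
  rw [Measure.map_apply_of_aemeasurable hqm measurableSet_Iic,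
    Measure.restrict_apply' measurableSet_Ioo]
  set A := ql μ ⁻¹' Iic t ∩ Ioo 0 1 with hA
  refine le_antisymm ?_ ?_
  · -- volume A ≤ μ (Iic t)
    have key : ∀ ε : ℝ, 0 < ε → volume A ≤ μ (Iic (t + ε)) := by
      intro ε hε
      have hsub : A ⊆ Ioc 0 ((μ (Iic (t + ε))).toReal) := by
        rintro u ⟨hu1, hu2⟩
        exact ⟨hu2.1, le_F_of_ql_le μ hu2.2 hu1 hε⟩
      calc volume A ≤ volume (Ioc 0 ((μ (Iic (t + ε))).toReal)) := measure_mono hsub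
        _ = ENNReal.ofReal ((μ (Iic (t + ε))).toReal - 0) := Real.volume_Ioc
        _ = μ (Iic (t + ε)) := by rw [sub_zero, ENNReal.ofReal_toReal (measure_ne_top μ _)]
    have hiInter : ⋂ m : ℕ, Iic (t + 1 / (m + 1)) = Iic t := by
      ext x
      simp only [mem_iInter, mem_Iic]
      constructor
      · intro hx
        by_contra hxt
        push_neg at hxt
        obtain ⟨m, hm⟩ := exists_nat_one_div_lt (by linarith : (0:ℝ) < x - t)
        have := hx m
        push_cast at hm ⊢
        linarith
      · intro hx m
        have : (0:ℝ) < 1 / (m + 1) := by positivity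
        linarith
    have htend : Filter.Tendsto (fun m : ℕ => μ (Iic (t + 1 / (m + 1)))) Filter.atTop
        (nhds (μ (Iic t))) := by
      have := tendsto_measure_iInter_atTop (μ := μ) (s := fun m : ℕ => Iic (t + 1 / (m + 1)))
        (fun m => nullMeasurableSet_Iic)
        (fun a b hab => Iic_subset_Iic.2 (by
          have hab' : (a:ℝ) ≤ b := Nat.cast_le.2 hab
          have : (1:ℝ) / (b + 1) ≤ 1 / (a + 1) := by
            apply one_div_le_one_div_of_le (by positivity)
            linarith
          linarith))
        ⟨0, measure_ne_top μ _⟩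
      rwa [hiInter] at this
    exact ge_of_tendsto htend (Filter.Eventually.of_forall fun m => key _ (by positivity))
  · -- μ (Iic t) ≤ volume A
    have hsub : Ioo 0 ((μ (Iic t)).toReal) ⊆ A := by
      rintro u ⟨hu1, hu2⟩
      have hle1 : (μ (Iic t)).toReal ≤ 1 := by
        rw [← ENNReal.toReal_one]
        exact ENNReal.toReal_mono ENNReal.one_ne_top prob_le_one
      exact ⟨ql_le μ hu1 hu2.le, hu1, lt_of_lt_of_le hu2 hle1⟩
    calc μ (Iic t) = ENNReal.ofReal ((μ (Iic t)).toReal - 0) := by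
          rw [sub_zero, ENNReal.ofReal_toReal (measure_ne_top μ _)]
      _ = volume (Ioo 0 ((μ (Iic t)).toReal)) := Real.volume_Ioo.symm
      _ ≤ volume A := measure_mono hsub

theorem stmt16 (μ ν : Measure ℝ) [IsProbabilityMeasure μ] [IsProbabilityMeasure ν]
    (hFG : ∀ t : ℝ, μ (Iic t) ≤ ν (Iic t))
    (n k : ℕ) (hk1 : 1 ≤ k) (hkn : k ≤ n)
    (hμint : Integrable (kthLargest n k) (Measure.pi fun _ : Fin n => μ))
    (hνint : Integrable (kthLargest n k) (Measure.pi fun _ : Fin n => ν)) :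
    (∫ x, kthLargest n k x ∂(Measure.pi fun _ : Fin n => ν)) ≤
      ∫ x, kthLargest n k x ∂(Measure.pi fun _ : Fin n => μ) := by
  set P : Measure ℝ := volume.restrict (Ioo (0:ℝ) 1) with hP
  -- quantile functions, measurable modifications
  have hqmμ : AEMeasurable (ql μ) P :=
    aemeasurable_restrict_of_monotoneOn measurableSet_Ioo (ql_monotoneOn μ)
  have hqmν : AEMeasurable (ql ν) P :=
    aemeasurable_restrict_of_monotoneOn measurableSet_Ioo (ql_monotoneOn ν)
  set qμ : ℝ → ℝ := hqmμ.mk _ with hqμdef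
  set qν : ℝ → ℝ := hqmν.mk _ with hqνdef
  have hmapμ : Measure.map qμ P = μ := by
    rw [← Measure.map_congr hqmμ.ae_eq_mk]; exact map_ql μ hqmμ
  have hmapν : Measure.map qν P = ν := by
    rw [← Measure.map_congr hqmν.ae_eq_mk]; exact map_ql ν hqmν
  have hpμ : MeasurePreserving qμ P μ := ⟨hqmμ.measurable_mk, hmapμ⟩
  have hpν : MeasurePreserving qν P ν := ⟨hqmν.measurable_mk, hmapν⟩
  have hΦμ : MeasurePreserving (fun x : Fin n → ℝ => fun i => qμ (x i))
      (Measure.pi fun _ => P) (Measure.pi fun _ => μ) :=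
    measurePreserving_pi _ _ (fun _ => hpμ)
  have hΦν : MeasurePreserving (fun x : Fin n → ℝ => fun i => qν (x i))
      (Measure.pi fun _ => P) (Measure.pi fun _ => ν) :=
    measurePreserving_pi _ _ (fun _ => hpν)
  -- rewrite the two integrals over the common base space
  have hIμ : (∫ x, kthLargest n k x ∂(Measure.pi fun _ : Fin n => μ)) =
      ∫ x, kthLargest n k (fun i => qμ (x i)) ∂(Measure.pi fun _ : Fin n => P) := by
    rw [← hΦμ.map_eq, integral_map hΦμ.aemeasurable]
    rw [hΦμ.map_eq]; exact hμint.1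
  have hIν : (∫ x, kthLargest n k x ∂(Measure.pi fun _ : Fin n => ν)) =
      ∫ x, kthLargest n k (fun i => qν (x i)) ∂(Measure.pi fun _ : Fin n => P) := by
    rw [← hΦν.map_eq, integral_map hΦν.aemeasurable]
    rw [hΦν.map_eq]; exact hνint.1
  rw [hIμ, hIν]
  -- integrability of the composed maps
  have hintμ : Integrable (fun x => kthLargest n k (fun i => qμ (x i)))
      (Measure.pi fun _ : Fin n => P) := by
    have := (integrable_map_measure (by rw [hΦμ.map_eq]; exact hμint.1)
      hΦμ.aemeasurable).1 (by rw [hΦμ.map_eq]; exact hμint)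
    exact this
  have hintν : Integrable (fun x => kthLargest n k (fun i => qν (x i)))
      (Measure.pi fun _ : Fin n => P) := by
    have := (integrable_map_measure (by rw [hΦν.map_eq]; exact hνint.1)
      hΦν.aemeasurable).1 (by rw [hΦν.map_eq]; exact hνint)
    exact this
  -- pointwise a.e. inequality qν ≤ qμ
  have hql : ∀ u ∈ Ioo (0:ℝ) 1, ql ν u ≤ ql μ u := by
    intro u hu
    exact csInf_le_csInf (ql_bddBelow ν hu.1) (ql_nonempty μ hu.2)
      (fun t ht => le_trans ht (ENNReal.toReal_mono (measure_ne_top ν _) (hFG t)))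
  have haeq : ∀ᵐ u ∂P, qν u ≤ qμ u := by
    filter_upwards [hqmν.ae_eq_mk, hqmμ.ae_eq_mk, ae_restrict_mem measurableSet_Ioo]
      with u h1 h2 h3
    show qν u ≤ qμ u
    rw [hqνdef, hqμdef, ← h1, ← h2]; exact hql u h3
  set E : Set ℝ := {u | qν u ≤ qμ u} with hE
  have hEm : MeasurableSet E := measurableSet_le hqmν.measurable_mk hqmμ.measurable_mk
  have hE1 : P E = 1 := by
    rw [← prob_compl_eq_zero_iff hEm]
    rw [ae_iff] at haeq
    simpa [hE, compl_setOf] using haeq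
  have hpi : (Measure.pi fun _ : Fin n => P) (Set.pi univ fun _ : Fin n => E) = 1 := by
    rw [Measure.pi_pi]; simp [hE1]
  have haepi : ∀ᵐ x ∂(Measure.pi fun _ : Fin n => P),
      x ∈ Set.pi univ (fun _ : Fin n => E) := by
    rw [ae_iff]
    have heq : {x : Fin n → ℝ | ¬ x ∈ Set.pi univ fun _ : Fin n => E} =
        (Set.pi univ fun _ : Fin n => E)ᶜ := rfl
    rw [heq, measure_compl (MeasurableSet.univ_pi fun _ => hEm) (measure_ne_top _ _), hpi,
      measure_univ]
    simp
  refine integral_mono_ae hintν hintμ ?_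
  filter_upwards [haepi] with x hx
  exact kth_mono hk1 hkn (fun i => hx i (mem_univ i))
end

section
/- Fix a real α > 1 and integers 1 ≤ k ≤ n. Let μ be the Pareto distribution with shape α (the Borel probability measure on ℝ with CDF F(x) = 1 − x^{−α} for x ≥ 1 and F(x) = 0 for x < 1) and let ν be the Fréchet distribution with shape α (CDF G(x) = exp(−x^{−α}) for x > 0 and G(x) = 0 for x ≤ 0). Let s_k : ℝ^n → ℝ map x to its k-th largest coordinate. Then ∫ s_k dν^{⊗n} ≤ ∫ s_k dμ^{⊗n} + 1. -/
open MeasureTheory Set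
open scoped ENNReal NNReal

section ListLemmas

variable {n k : ℕ}

lemma sorted_getElem_count {l : List ℝ} (hs : l.Pairwise (· ≥ ·)) {j : ℕ} (hj : j < l.length)
    {t : ℝ} : t ≤ l[j] ↔ j + 1 ≤ l.countP (fun a => decide (t ≤ a)) := by
  rw [List.pairwise_iff_getElem] at hs
  constructor
  · intro ht
    calc j + 1 = (l.take (j+1)).countP (fun a => decide (t ≤ a)) := by
          rw [eq_comm, List.countP_eq_length.2, List.length_take]
          · omega
          · intro a ha
            obtain ⟨i, hi, rfl⟩ := List.mem_iff_getElem.1 ha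
            rw [List.getElem_take]
            obtain ⟨hik, hil⟩ : i < j + 1 ∧ i < l.length := by
              simpa [List.length_take, lt_min_iff] using hi
            simp only [decide_eq_true_eq]
            rcases eq_or_lt_of_le (Nat.lt_succ_iff.1 hik) with h | h
            · simp only [h]; exact ht
            · exact le_trans ht (hs i j hil hj h)
      _ ≤ l.countP (fun a => decide (t ≤ a)) := (List.take_sublist _ _).countP_le
  · intro hc
    by_contra hlt
    push_neg at hlt
    have h1 : l.countP (fun a => decide (t ≤ a)) =
        (l.take j).countP (fun a => decide (t ≤ a)) +
        (l.drop j).countP (fun a => decide (t ≤ a)) := by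
      conv_lhs => rw [← List.take_append_drop j l]
      rw [List.countP_append]
    have h2 : (l.drop j).countP (fun a => decide (t ≤ a)) = 0 := by
      rw [List.countP_eq_zero]
      intro a ha
      obtain ⟨i, hi, rfl⟩ := List.mem_iff_getElem.1 ha
      rw [List.getElem_drop]
      simp only [decide_eq_true_eq, not_le]
      have hile : j + i < l.length := by
        have := hi; simp [List.length_drop] at this; omega
      rcases Nat.eq_zero_or_pos i with h | h
      · simpa [h] using hlt
      · exact lt_of_le_of_lt (hs j (j+i) hj hile (by omega)) hlt
    have h3 : (l.take j).countP (fun a => decide (t ≤ a)) ≤ j := by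
      calc _ ≤ (l.take j).length := List.countP_le_length
        _ ≤ j := by simp [List.length_take]
    omega

lemma le_kthLargest_iff (hk1 : 1 ≤ k) (hkn : k ≤ n) (x : Fin n → ℝ) (t : ℝ) :
    t ≤ kthLargest n k x ↔ k ≤ (List.ofFn x).countP (fun a => decide (t ≤ a)) := by
  unfold kthLargest
  have hlen : ((List.ofFn x).insertionSort (· ≥ ·)).length = n := by
    rw [List.length_insertionSort, List.length_ofFn]
  have hkl : k - 1 < ((List.ofFn x).insertionSort (· ≥ ·)).length := by omega
  rw [List.getD_eq_getElem _ _ hkl,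
    sorted_getElem_count (List.pairwise_insertionSort _ _) hkl,
    ((List.perm_insertionSort (· ≥ ·) (List.ofFn x)).countP_eq _)]
  omega

lemma countP_le_countP_of_forall₂ {l1 l2 : List ℝ} {t : ℝ}
    (h : List.Forall₂ (· ≤ ·) l1 l2) :
    l1.countP (fun a => decide (t ≤ a)) ≤ l2.countP (fun a => decide (t ≤ a)) := by
  induction h with
  | nil => simp
  | @cons a b l1' l2' hab htl ih =>
    rw [List.countP_cons, List.countP_cons]
    have hle : (if decide (t ≤ a) = true then 1 else 0) ≤
        (if decide (t ≤ b) = true then 1 else 0) := by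
      split_ifs with h1 h2
      · exact le_rfl
      · exact absurd (le_trans (of_decide_eq_true h1) hab) (by simpa using h2)
      · exact Nat.zero_le _
      · exact le_rfl
    omega

lemma kthLargest_mono (hk1 : 1 ≤ k) (hkn : k ≤ n) {x y : Fin n → ℝ}
    (h : ∀ i, y i ≤ x i) : kthLargest n k y ≤ kthLargest n k x := by
  rw [le_kthLargest_iff hk1 hkn]
  refine le_trans ((le_kthLargest_iff hk1 hkn y _).1 le_rfl) ?_
  refine countP_le_countP_of_forall₂ ?_
  rw [List.forall₂_iff_get]
  refine ⟨by simp, fun i h1 h2 => by simpa using h _⟩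

lemma kthLargest_nonneg (hk1 : 1 ≤ k) (hkn : k ≤ n) {x : Fin n → ℝ}
    (h : ∀ i, 0 ≤ x i) : 0 ≤ kthLargest n k x := by
  rw [le_kthLargest_iff hk1 hkn]
  calc k ≤ n := hkn
    _ = (List.ofFn x).length := by simp
    _ = (List.ofFn x).countP _ := (List.countP_eq_length.2 ?_).symm
  intro a ha
  obtain ⟨i, rfl⟩ := List.mem_ofFn.1 ha
  simpa using h i

lemma countP_ofFn {n : ℕ} (x : Fin n → ℝ) (p : ℝ → Bool) :
    (List.ofFn x).countP p = (Finset.univ.filter fun i => p (x i)).card := by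
  induction n with
  | zero => simp
  | succ m ih =>
    rw [List.ofFn_succ, List.countP_cons, ih]
    rw [Finset.card_filter, Finset.card_filter, Fin.sum_univ_succ]
    exact Nat.add_comm _ _

lemma measurable_kthLargest (hk1 : 1 ≤ k) (hkn : k ≤ n) :
    Measurable (kthLargest n k) := by
  apply measurable_of_Ici
  intro t
  have : kthLargest n k ⁻¹' Ici t =
      ⋃ (S : Finset (Fin n)) (_ : S.card = k), ⋂ i ∈ S, {x : Fin n → ℝ | t ≤ x i} := by
    ext x
    simp only [mem_preimage, mem_Ici, mem_iUnion, mem_iInter, mem_setOf_eq]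
    rw [le_kthLargest_iff hk1 hkn, countP_ofFn]
    constructor
    · intro h
      obtain ⟨S, hS, hcard⟩ := Finset.exists_subset_card_eq h
      exact ⟨S, hcard, fun i hi => by simpa using (Finset.mem_filter.1 (hS hi)).2⟩
    · rintro ⟨S, hcard, h⟩
      calc k = S.card := hcard.symm
        _ ≤ _ := Finset.card_le_card fun i hi =>
            Finset.mem_filter.2 ⟨Finset.mem_univ _, by simpa using h i hi⟩
  rw [this]
  refine MeasurableSet.iUnion fun S => MeasurableSet.iUnion fun _ =>
    MeasurableSet.biInter S.countable_toSet fun i _ => ?_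
  exact measurableSet_le measurable_const (measurable_pi_apply i)

lemma kthLargest_mem (hk1 : 1 ≤ k) (hkn : k ≤ n) (x : Fin n → ℝ) :
    ∃ i, kthLargest n k x = x i := by
  have hlen : ((List.ofFn x).insertionSort (· ≥ ·)).length = n := by
    rw [List.length_insertionSort, List.length_ofFn]
  have hkl : k - 1 < ((List.ofFn x).insertionSort (· ≥ ·)).length := by omega
  have hmem : kthLargest n k x ∈ (List.ofFn x).insertionSort (· ≥ ·) := by
    unfold kthLargest
    rw [List.getD_eq_getElem _ _ hkl]
    exact List.getElem_mem _
  have := (List.perm_insertionSort (· ≥ ·) (List.ofFn x)).mem_iff.1 hmem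
  obtain ⟨i, hi⟩ := List.mem_ofFn.1 this
  exact ⟨i, hi.symm⟩

end ListLemmas

noncomputable def pfT (α : ℝ) (x : ℝ) : ℝ :=
  if 1 < x then (-Real.log (1 - x ^ (-α))) ^ (-α⁻¹) else 0

noncomputable def pfS (α : ℝ) (y : ℝ) : ℝ :=
  (1 - Real.exp (-(y ^ (-α)))) ^ (-α⁻¹)

section Analytic
variable {α : ℝ} (hα : 1 < α)
include hα

lemma rpow_negalpha_mem {x : ℝ} (hx : 1 < x) : 0 < x ^ (-α) ∧ x ^ (-α) < 1 :=
  ⟨Real.rpow_pos_of_pos (by linarith) _,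
    Real.rpow_lt_one_of_one_lt_of_neg hx (by linarith)⟩

lemma negLog_pos {x : ℝ} (hx : 1 < x) : 0 < -Real.log (1 - x ^ (-α)) := by
  obtain ⟨h1, h2⟩ := rpow_negalpha_mem hα hx
  have := Real.log_neg (x := 1 - x ^ (-α)) (by linarith) (by linarith)
  linarith

lemma pfT_pos {x : ℝ} (hx : 1 < x) : 0 < pfT α x := by
  rw [pfT, if_pos hx]
  exact Real.rpow_pos_of_pos (negLog_pos hα hx) _

lemma pfT_nonneg (x : ℝ) : 0 ≤ pfT α x := by
  rcases lt_or_ge 1 x with h | h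
  · exact (pfT_pos hα h).le
  · rw [pfT, if_neg (not_lt.2 h)]

lemma rpow_rpow_cancel {L : ℝ} (hL : 0 < L) : (L ^ (-α⁻¹)) ^ (-α) = L := by
  rw [← Real.rpow_mul hL.le]
  rw [show (-α⁻¹) * (-α) = α⁻¹ * α by ring, inv_mul_cancel₀ (by linarith), Real.rpow_one]

lemma pfT_le {x : ℝ} (hx : 1 < x) : pfT α x ≤ x := by
  obtain ⟨h1, h2⟩ := rpow_negalpha_mem hα hx
  rw [pfT, if_pos hx]
  have hlog : x ^ (-α) ≤ -Real.log (1 - x ^ (-α)) := by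
    have := Real.log_le_sub_one_of_pos (x := 1 - x ^ (-α)) (by linarith)
    linarith
  calc (-Real.log (1 - x ^ (-α))) ^ (-α⁻¹) ≤ (x ^ (-α)) ^ (-α⁻¹) :=
        Real.rpow_le_rpow_of_nonpos h1 hlog (neg_nonpos.2 (inv_nonneg.2 (by linarith)))
    _ = x := by
        rw [← Real.rpow_mul (by linarith : (0:ℝ) ≤ x)]
        rw [show (-α) * (-α⁻¹) = α * α⁻¹ by ring, mul_inv_cancel₀ (by linarith), Real.rpow_one]

omit hα in
lemma one_sub_exp_mem {y : ℝ} (hy : 0 < y) :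
    0 < 1 - Real.exp (-(y ^ (-α))) ∧ 1 - Real.exp (-(y ^ (-α))) < 1 := by
  have h1 : 0 < y ^ (-α) := Real.rpow_pos_of_pos hy _
  have h2 : Real.exp (-(y ^ (-α))) < 1 := by
    rw [Real.exp_lt_one_iff]; linarith
  have h3 : 0 < Real.exp (-(y ^ (-α))) := Real.exp_pos _
  exact ⟨by linarith, by linarith⟩

lemma one_le_pfS {y : ℝ} (hy : 0 < y) : 1 ≤ pfS α y := by
  obtain ⟨h1, h2⟩ := one_sub_exp_mem (α := α) hy
  rw [pfS]
  calc (1:ℝ) = (1:ℝ) ^ (-α⁻¹) := (Real.one_rpow _).symm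
    _ ≤ _ := Real.rpow_le_rpow_of_nonpos h1 h2.le (neg_nonpos.2 (inv_nonneg.2 (by linarith)))

lemma pfT_le_iff {x y : ℝ} (hx : 1 < x) (hy : 0 < y) :
    pfT α x ≤ y ↔ x ≤ pfS α y := by
  obtain ⟨hu1, hu2⟩ := rpow_negalpha_mem hα hx
  obtain ⟨hc1, hc2⟩ := one_sub_exp_mem (α := α) hy
  have hαneg : -α < 0 := by linarith
  have hL := negLog_pos hα hx
  have hTx := pfT_pos hα hx
  have hS : 0 < pfS α y := lt_of_lt_of_le one_pos (one_le_pfS hα hy)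
  rw [← Real.rpow_le_rpow_iff_of_neg hy hTx hαneg]
  rw [show pfT α x = (-Real.log (1 - x ^ (-α))) ^ (-α⁻¹) from if_pos hx]
  rw [rpow_rpow_cancel hα hL]
  rw [show (x ≤ pfS α y ↔ (pfS α y) ^ (-α) ≤ x ^ (-α)) from
    (Real.rpow_le_rpow_iff_of_neg hS (by linarith) hαneg).symm]
  rw [show (pfS α y) ^ (-α) = 1 - Real.exp (-(y ^ (-α))) from rpow_rpow_cancel hα hc1]
  constructor
  · intro h
    have : Real.log (1 - x ^ (-α)) ≤ -(y ^ (-α)) := by linarith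
    have := (Real.log_le_iff_le_exp (by linarith)).1 this
    linarith
  · intro h
    have h' : 1 - x ^ (-α) ≤ Real.exp (-(y ^ (-α))) := by linarith
    have := (Real.log_le_iff_le_exp (by linarith : (0:ℝ) < 1 - x ^ (-α))).2 h'
    linarith

omit hα in
lemma measurable_pfT : Measurable (pfT α) := by
  unfold pfT
  refine Measurable.ite measurableSet_Ioi ?_ measurable_const
  have h1 : Measurable fun x : ℝ => 1 - x ^ (-α) := by fun_prop
  have h2 : Measurable fun w : ℝ => w ^ (-α⁻¹) := by fun_prop
  exact h2.comp (Real.measurable_log.comp h1).neg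

end Analytic

section MapEq
variable {α : ℝ} (hα : 1 < α)
include hα

omit hα in
lemma mu_Iic_one (μ : Measure ℝ) [IsProbabilityMeasure μ]
    (hμ : ∀ x : ℝ, (μ (Iic x)).toReal = if 1 ≤ x then 1 - x ^ (-α) else 0) :
    μ (Iic 1) = 0 := by
  have h := hμ 1
  rw [if_pos le_rfl, Real.one_rpow] at h
  rw [← ENNReal.ofReal_toReal (measure_ne_top μ (Iic 1)), h]; simp

lemma map_pfT_eq (μ ν : Measure ℝ) [IsProbabilityMeasure μ] [IsProbabilityMeasure ν]
    (hμ : ∀ x : ℝ, (μ (Iic x)).toReal = if 1 ≤ x then 1 - x ^ (-α) else 0)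
    (hν : ∀ x : ℝ, (ν (Iic x)).toReal = if 0 < x then Real.exp (-(x ^ (-α))) else 0) :
    μ.map (pfT α) = ν := by
  have hmeas : Measurable (pfT α) := measurable_pfT
  haveI : IsProbabilityMeasure (μ.map (pfT α)) :=
    Measure.isProbabilityMeasure_map hmeas.aemeasurable
  refine Measure.ext_of_Iic _ _ (fun y => ?_)
  rw [Measure.map_apply hmeas measurableSet_Iic]
  rcases le_or_gt y 0 with hy | hy
  · have hν0 : ν (Iic y) = 0 := by
      have h := hν y
      rw [if_neg (not_lt.2 hy)] at h
      rw [← ENNReal.ofReal_toReal (measure_ne_top ν (Iic y)), h]; simp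
    rw [hν0]
    refine measure_mono_null ?_ (mu_Iic_one μ hμ)
    intro x hx
    simp only [mem_preimage, mem_Iic] at hx ⊢
    by_contra hx1
    push_neg at hx1
    exact absurd (le_trans hx hy) (not_le.2 (pfT_pos hα hx1))
  · have hpre : pfT α ⁻¹' Iic y = Iic (pfS α y) := by
      ext z
      simp only [mem_preimage, mem_Iic]
      rcases le_or_gt z 1 with hz | hz
      · constructor
        · intro _; exact le_trans hz (one_le_pfS hα hy)
        · intro _; rw [pfT, if_neg (not_lt.2 hz)]; exact hy.le
      · exact pfT_le_iff hα hz hy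
    rw [hpre]
    have hc := one_sub_exp_mem (α := α) hy
    have hS1 : (1:ℝ) ≤ pfS α y := one_le_pfS hα hy
    have hμS : μ (Iic (pfS α y)) = ENNReal.ofReal (1 - (pfS α y) ^ (-α)) := by
      rw [← ENNReal.ofReal_toReal (measure_ne_top μ (Iic (pfS α y))), hμ, if_pos hS1]
    rw [hμS, ← ENNReal.ofReal_toReal (measure_ne_top ν (Iic y)), hν, if_pos hy]
    congr 1
    rw [show (pfS α y) ^ (-α) = 1 - Real.exp (-(y ^ (-α))) from rpow_rpow_cancel hα hc.1]
    ring

end MapEq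

section Pareto
variable {α : ℝ} (hα : 1 < α)
include hα

lemma mu_Ioi (μ : Measure ℝ) [IsProbabilityMeasure μ]
    (hμ : ∀ x : ℝ, (μ (Iic x)).toReal = if 1 ≤ x then 1 - x ^ (-α) else 0)
    {t : ℝ} (ht : 1 ≤ t) : μ (Ioi t) = ENNReal.ofReal (t ^ (-α)) := by
  have hu1 : 0 < t ^ (-α) := Real.rpow_pos_of_pos (by linarith) _
  have hu2 : t ^ (-α) ≤ 1 := Real.rpow_le_one_of_one_le_of_nonpos ht (by linarith)
  have hIic : μ (Iic t) = ENNReal.ofReal (1 - t ^ (-α)) := by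
    rw [← ENNReal.ofReal_toReal (measure_ne_top μ (Iic t)), hμ, if_pos ht]
  have hcompl : μ (Ioi t) = 1 - μ (Iic t) := by
    rw [← Set.compl_Iic, measure_compl measurableSet_Iic (measure_ne_top μ _), measure_univ]
  rw [hcompl, hIic, show (1 : ℝ≥0∞) = ENNReal.ofReal 1 by simp,
    ← ENNReal.ofReal_sub _ (by linarith)]
  norm_num

lemma pareto_integrable_id (μ : Measure ℝ) [IsProbabilityMeasure μ]
    (hμ : ∀ x : ℝ, (μ (Iic x)).toReal = if 1 ≤ x then 1 - x ^ (-α) else 0) :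
    Integrable (fun r : ℝ => r) μ := by
  refine ⟨measurable_id.aestronglyMeasurable, ?_⟩
  rw [hasFiniteIntegral_iff_norm]
  calc ∫⁻ a, ENNReal.ofReal ‖a‖ ∂μ
      = ∫⁻ t in Ioi 0, μ {a : ℝ | t < ‖a‖} := by
        exact lintegral_eq_lintegral_meas_lt μ (Filter.Eventually.of_forall fun a => norm_nonneg a)
          measurable_norm.aemeasurable
    _ ≤ ∫⁻ t in Ioi 0, μ (Ioi t) := by
        refine lintegral_mono fun t => ?_
        calc μ {a : ℝ | t < ‖a‖} ≤ μ (Ioi t ∪ Iic 1) := by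
              refine measure_mono fun a ha => ?_
              simp only [mem_setOf_eq, Real.norm_eq_abs] at ha
              rcases le_or_gt a 1 with h | h
              · exact Or.inr h
              · exact Or.inl (by rw [mem_Ioi]; calc t < |a| := ha
                  _ = a := abs_of_pos (by linarith))
          _ ≤ μ (Ioi t) + μ (Iic 1) := measure_union_le _ _
          _ = μ (Ioi t) := by rw [mu_Iic_one μ hμ, add_zero]
    _ < ⊤ := by
        rw [show Ioi (0:ℝ) = Ioc 0 1 ∪ Ioi 1 from (Ioc_union_Ioi_eq_Ioi zero_le_one).symm,
          lintegral_union measurableSet_Ioi Ioc_disjoint_Ioi_same]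
        have hb1 : ∫⁻ t in Ioc (0:ℝ) 1, μ (Ioi t) ≤ 1 := by
          calc ∫⁻ t in Ioc (0:ℝ) 1, μ (Ioi t) ≤ ∫⁻ _ in Ioc (0:ℝ) 1, 1 :=
                lintegral_mono fun t => prob_le_one
            _ = volume (Ioc (0:ℝ) 1) := by rw [setLIntegral_one]
            _ = 1 := by rw [Real.volume_Ioc]; norm_num
        have hb2 : ∫⁻ t in Ioi (1:ℝ), μ (Ioi t) < ⊤ := by
          have hcong : ∫⁻ t in Ioi (1:ℝ), μ (Ioi t)
              = ∫⁻ t in Ioi (1:ℝ), ENNReal.ofReal (t ^ (-α)) := by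
            refine setLIntegral_congr_fun measurableSet_Ioi
              (fun t ht => ?_)
            exact mu_Ioi hα μ hμ (le_of_lt ht)
          rw [hcong]
          have hint : IntegrableOn (fun t : ℝ => t ^ (-α)) (Ioi 1) :=
            integrableOn_Ioi_rpow_of_lt (by linarith) zero_lt_one
          have := hint.2
          rw [hasFiniteIntegral_iff_norm] at this
          refine lt_of_le_of_lt (le_of_eq ?_) this
          refine setLIntegral_congr_fun measurableSet_Ioi
            (fun t ht => ?_)
          rw [Real.norm_eq_abs, abs_of_pos (Real.rpow_pos_of_pos (by linarith [mem_Ioi.1 ht]) _)]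
        exact ENNReal.add_lt_top.2 ⟨lt_of_le_of_lt hb1 (by norm_num), hb2⟩

end Pareto

lemma measurePreserving_eval' {n : ℕ} (μ : Measure ℝ) [IsProbabilityMeasure μ] (i : Fin n) :
    MeasurePreserving (Function.eval i) (Measure.pi fun _ : Fin n => μ) μ := by
  refine ⟨measurable_pi_apply i, ?_⟩
  refine Measure.ext fun s hs => ?_
  rw [Measure.map_apply (measurable_pi_apply i) hs, Set.eval_preimage, Measure.pi_pi]
  have h : ∀ j : Fin n, μ (Function.update (fun _ : Fin n => Set.univ) i s j)
      = if j = i then μ s else 1 := by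
    intro j; rcases eq_or_ne j i with h | h
    · subst h; simp
    · simp [Function.update_of_ne h, h]
  rw [Finset.prod_congr rfl (fun j _ => h j), Finset.prod_ite_eq' Finset.univ i (fun _ => μ s)]
  simp

lemma ae_all_gt_one {n : ℕ} (μ : Measure ℝ) [IsProbabilityMeasure μ]
    (h1 : μ (Iic 1) = 0) :
    ∀ᵐ x ∂(Measure.pi fun _ : Fin n => μ), ∀ i, 1 < x i := by
  rw [MeasureTheory.ae_all_iff]
  intro i
  rw [ae_iff]
  refine measure_mono_null (fun x hx => ?_) (Measure.pi_eval_preimage_null (μ := fun _ : Fin n => μ) h1 (i := i))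
  simp only [mem_setOf_eq, not_lt] at hx
  exact hx

lemma integrable_kthLargest {α : ℝ} (hα : 1 < α) {n k : ℕ} (hk1 : 1 ≤ k) (hkn : k ≤ n)
    (μ : Measure ℝ) [IsProbabilityMeasure μ]
    (hμ : ∀ x : ℝ, (μ (Iic x)).toReal = if 1 ≤ x then 1 - x ^ (-α) else 0) :
    Integrable (kthLargest n k) (Measure.pi fun _ : Fin n => μ) := by
  have hco : ∀ i : Fin n, Integrable (fun x : Fin n → ℝ => x i)
      (Measure.pi fun _ : Fin n => μ) := fun i =>
    ((measurePreserving_eval' μ i).integrable_comp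
      measurable_id.aestronglyMeasurable).2 (pareto_integrable_id hα μ hμ)
  have hsum : Integrable (fun x : Fin n → ℝ => ∑ i, |x i|)
      (Measure.pi fun _ : Fin n => μ) :=
    integrable_finset_sum _ (fun i _ => (hco i).abs)
  refine hsum.mono (measurable_kthLargest hk1 hkn).aestronglyMeasurable
    (Filter.Eventually.of_forall fun x => ?_)
  obtain ⟨i, hi⟩ := kthLargest_mem hk1 hkn x
  rw [Real.norm_eq_abs, hi, Real.norm_eq_abs]
  have h1 : |x i| ≤ ∑ j, |x j| :=
    Finset.single_le_sum (fun j _ => abs_nonneg (x j)) (Finset.mem_univ i)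
  exact le_trans h1 (le_abs_self _)

theorem stmt17 (α : ℝ) (hα : 1 < α) (n k : ℕ) (hk1 : 1 ≤ k) (hkn : k ≤ n)
    (μ ν : Measure ℝ) [IsProbabilityMeasure μ] [IsProbabilityMeasure ν]
    (hμ : ∀ x : ℝ, (μ (Iic x)).toReal = if 1 ≤ x then 1 - x ^ (-α) else 0)
    (hν : ∀ x : ℝ, (ν (Iic x)).toReal = if 0 < x then Real.exp (-(x ^ (-α))) else 0) :
    (∫ x, kthLargest n k x ∂(Measure.pi fun _ : Fin n => ν)) ≤
      (∫ x, kthLargest n k x ∂(Measure.pi fun _ : Fin n => μ)) + 1 := by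
  have hmeask := measurable_kthLargest hk1 hkn
  have hT : MeasurePreserving (pfT α) μ ν := ⟨measurable_pfT, map_pfT_eq hα μ ν hμ hν⟩
  have hpi : MeasurePreserving (fun x : Fin n → ℝ => fun i => pfT α (x i))
      (Measure.pi fun _ : Fin n => μ) (Measure.pi fun _ : Fin n => ν) :=
    measurePreserving_pi _ _ (fun _ => hT)
  rw [← hpi.map_eq, integral_map hpi.measurable.aemeasurable hmeask.aestronglyMeasurable]
  have hint := integrable_kthLargest hα hk1 hkn μ hμ
  have hle : (∫ x, kthLargest n k (fun i => pfT α (x i)) ∂(Measure.pi fun _ : Fin n => μ))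
      ≤ ∫ x, kthLargest n k x ∂(Measure.pi fun _ : Fin n => μ) := by
    refine integral_mono_of_nonneg ?_ hint ?_
    · exact Filter.Eventually.of_forall fun x =>
        kthLargest_nonneg hk1 hkn (fun i => pfT_nonneg hα _)
    · filter_upwards [ae_all_gt_one μ (mu_Iic_one μ hμ)] with x hx
      exact kthLargest_mono hk1 hkn (fun i => pfT_le hα (hx i))
  linarith
end

section
/- Fix a real α > 1, let F(x) = exp(−x^{−α}) and f(x) = α x^{−(α+1)} exp(−x^{−α}) for x > 0 be the Fréchet CDF and density. Let λ_i ≥ 0, let p ≥ 0 and q ≥ 0 be integers, and set h(z) = f(z+λ_i) F(z+λ_i)^q. Then for all z, w ≥ 0, the quantity (1 − F(z+λ_i))^p / ((z+λ_i)(w+λ_i)^{αp}) + (1 − F(w+λ_i))^p / ((w+λ_i)(z+λ_i)^{αp}) − (1 − F(w+λ_i))^p / (z+λ_i)^{αp+1} − (1 − F(z+λ_i))^p / (w+λ_i)^{αp+1} is nonpositive; equivalently, ∫_0^∞ h(z)(1 − F(z+λ_i))^p/(z+λ_i) dz · ∫_0^∞ h(z)/(z+λ_i)^{αp} dz ≤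 ∫_0^∞ h(z)/(z+λ_i)^{αp+1} dz · ∫_0^∞ h(z)(1 − F(z+λ_i))^p dz. -/
open MeasureTheory Set

private lemma frechet_aux1 {s t : ℝ} (hs : 0 < s) (hst : s ≤ t) :
    s * (1 - Real.exp (-t)) ≤ t * (1 - Real.exp (-s)) := by
  have ht : 0 < t := hs.trans_le hst
  have h := convexOn_exp.2 (Set.mem_univ (-t)) (Set.mem_univ (0:ℝ))
    (show (0:ℝ) ≤ s / t by positivity)
    (show (0:ℝ) ≤ 1 - s / t by rw [sub_nonneg]; exact div_le_one_of_le₀ hst ht.le)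
    (show s / t + (1 - s / t) = 1 by ring)
  simp only [smul_eq_mul, mul_zero, add_zero, Real.exp_zero, mul_one] at h
  have hst' : s / t * (-t) = -s := by field_simp
  rw [hst'] at h
  have h2 : t * Real.exp (-s) ≤ t * (s / t * Real.exp (-t) + (1 - s / t)) :=
    mul_le_mul_of_nonneg_left h ht.le
  have h3 : t * (s / t * Real.exp (-t) + (1 - s / t)) = s * Real.exp (-t) + (t - s) := by
    field_simp
  linarith

private lemma frechet_aux2 {α a b : ℝ} (hα : 0 < α) (ha : 0 < a) (hab : a ≤ b) :
    (1 - Real.exp (-(a ^ (-α)))) * a ^ α ≤ (1 - Real.exp (-(b ^ (-α)))) * b ^ α := by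
  have hb : 0 < b := ha.trans_le hab
  set s := b ^ (-α) with hsdef
  set t := a ^ (-α) with htdef
  have hs : 0 < s := Real.rpow_pos_of_pos hb _
  have ht : 0 < t := Real.rpow_pos_of_pos ha _
  have hst : s ≤ t := Real.rpow_le_rpow_of_nonpos ha hab (by linarith)
  have key := frechet_aux1 hs hst
  have hat : a ^ α = t⁻¹ := by
    rw [htdef, Real.rpow_neg ha.le, inv_inv]
  have hbs : b ^ α = s⁻¹ := by
    rw [hsdef, Real.rpow_neg hb.le, inv_inv]
  rw [hat, hbs]
  have hdiv : (1 - Real.exp (-t)) / t ≤ (1 - Real.exp (-s)) / s :=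
    (div_le_div_iff₀ ht hs).2 (by linarith)
  simpa [div_eq_mul_inv] using hdiv

private lemma frechet_aux3' (α : ℝ) (hα : 1 < α) (p : ℕ) (hp : p ≠ 0) {a b : ℝ}
    (ha : 0 < a) (hab : a ≤ b) :
    (1 - Real.exp (-(a ^ (-α)))) ^ p / (a * b ^ (α * (p : ℝ))) +
      (1 - Real.exp (-(b ^ (-α)))) ^ p / (b * a ^ (α * (p : ℝ))) -
      (1 - Real.exp (-(b ^ (-α)))) ^ p / a ^ (α * (p : ℝ) + 1) -
      (1 - Real.exp (-(a ^ (-α)))) ^ p / b ^ (α * (p : ℝ) + 1) ≤ 0 := by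
  have hb : 0 < b := ha.trans_le hab
  set A := (1 - Real.exp (-(a ^ (-α)))) ^ p with hA
  set B := (1 - Real.exp (-(b ^ (-α)))) ^ p with hB
  have haP : 0 < a ^ (α * (p : ℝ)) := Real.rpow_pos_of_pos ha _
  have hbP : 0 < b ^ (α * (p : ℝ)) := Real.rpow_pos_of_pos hb _
  -- nonnegativity of the bases
  have hexpa : Real.exp (-(a ^ (-α))) ≤ 1 :=
    Real.exp_le_one_iff.2 (neg_nonpos.2 (Real.rpow_nonneg ha.le _))
  have hbasea : 0 ≤ (1 - Real.exp (-(a ^ (-α)))) * a ^ α :=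
    mul_nonneg (by linarith) (Real.rpow_nonneg ha.le _)
  -- the key monotonicity
  have hmono := frechet_aux2 (by linarith : (0:ℝ) < α) ha hab
  have key : A * a ^ (α * (p : ℝ)) ≤ B * b ^ (α * (p : ℝ)) := by
    have e1 : a ^ (α * (p : ℝ)) = (a ^ α) ^ p := by
      rw [Real.rpow_mul ha.le, Real.rpow_natCast]
    have e2 : b ^ (α * (p : ℝ)) = (b ^ α) ^ p := by
      rw [Real.rpow_mul hb.le, Real.rpow_natCast]
    rw [hA, hB, e1, e2, ← mul_pow, ← mul_pow]
    exact pow_le_pow_left₀ hbasea hmono p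
  have hdiv : A / b ^ (α * (p : ℝ)) ≤ B / a ^ (α * (p : ℝ)) :=
    (div_le_div_iff₀ hbP haP).2 (by linarith)
  have hinv : 1 / b ≤ 1 / a := one_div_le_one_div_of_le ha hab
  have e1 : a ^ (α * (p : ℝ) + 1) = a ^ (α * (p : ℝ)) * a := Real.rpow_add_one ha.ne' _
  have e2 : b ^ (α * (p : ℝ) + 1) = b ^ (α * (p : ℝ)) * b := Real.rpow_add_one hb.ne' _
  rw [e1, e2]
  have hfac : A / (a * b ^ (α * (p : ℝ))) + B / (b * a ^ (α * (p : ℝ))) -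
      B / (a ^ (α * (p : ℝ)) * a) - A / (b ^ (α * (p : ℝ)) * b) =
      (1 / a - 1 / b) * (A / b ^ (α * (p : ℝ)) - B / a ^ (α * (p : ℝ))) := by
    field_simp
    ring
  rw [hfac]
  exact mul_nonpos_of_nonneg_of_nonpos (by linarith) (by linarith)

private lemma frechet_aux3 (α : ℝ) (hα : 1 < α) (p : ℕ) {a b : ℝ}
    (ha : 0 ≤ a) (hb : 0 ≤ b) :
    (1 - Real.exp (-(a ^ (-α)))) ^ p / (a * b ^ (α * (p : ℝ))) +
      (1 - Real.exp (-(b ^ (-α)))) ^ p / (b * a ^ (α * (p : ℝ))) -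
      (1 - Real.exp (-(b ^ (-α)))) ^ p / a ^ (α * (p : ℝ) + 1) -
      (1 - Real.exp (-(a ^ (-α)))) ^ p / b ^ (α * (p : ℝ) + 1) ≤ 0 := by
  rcases Nat.eq_zero_or_pos p with hp | hp
  · subst hp
    simp [Real.rpow_one]
  have hp' : p ≠ 0 := hp.ne'
  have hαp : α * (p : ℝ) ≠ 0 := by
    have : (1:ℝ) ≤ (p : ℝ) := by exact_mod_cast hp
    positivity
  have hαp1 : α * (p : ℝ) + 1 ≠ 0 := by
    have : (1:ℝ) ≤ (p : ℝ) := by exact_mod_cast hp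
    positivity
  rcases ha.eq_or_lt with rfl | ha'
  · simp [Real.zero_rpow (by linarith : -α ≠ 0), Real.zero_rpow hαp,
      Real.zero_rpow hαp1, zero_pow hp']
  rcases hb.eq_or_lt with rfl | hb'
  · simp [Real.zero_rpow (by linarith : -α ≠ 0), Real.zero_rpow hαp,
      Real.zero_rpow hαp1, zero_pow hp']
  rcases le_total a b with hab | hab
  · exact frechet_aux3' α hα p hp' ha' hab
  · have := frechet_aux3' α hα p hp' hb' hab
    linarith

theorem stmt18 (α : ℝ) (hα : 1 < α) (li : ℝ) (hli : 0 ≤ li) (p q : ℕ)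
    (F f h : ℝ → ℝ)
    (hF : ∀ x, F x = Real.exp (-(x ^ (-α))))
    (hf : ∀ x, f x = α * x ^ (-(α + 1)) * Real.exp (-(x ^ (-α))))
    (hh : ∀ z, h z = f (z + li) * F (z + li) ^ q)
    (hint1 : IntegrableOn (fun z => h z * (1 - F (z + li)) ^ p / (z + li)) (Ioi 0))
    (hint2 : IntegrableOn (fun z => h z / (z + li) ^ (α * (p : ℝ))) (Ioi 0))
    (hint3 : IntegrableOn (fun z => h z / (z + li) ^ (α * (p : ℝ) + 1)) (Ioi 0))
    (hint4 : IntegrableOn (fun z => h z * (1 - F (z + li)) ^ p) (Ioi 0)) :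
    (∀ z, 0 ≤ z → ∀ w, 0 ≤ w →
      (1 - F (z + li)) ^ p / ((z + li) * (w + li) ^ (α * (p : ℝ))) +
        (1 - F (w + li)) ^ p / ((w + li) * (z + li) ^ (α * (p : ℝ))) -
        (1 - F (w + li)) ^ p / (z + li) ^ (α * (p : ℝ) + 1) -
        (1 - F (z + li)) ^ p / (w + li) ^ (α * (p : ℝ) + 1) ≤ 0) ∧
    (∫ z in Ioi (0:ℝ), h z * (1 - F (z + li)) ^ p / (z + li)) *
        (∫ z in Ioi (0:ℝ), h z / (z + li) ^ (α * (p : ℝ))) ≤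
      (∫ z in Ioi (0:ℝ), h z / (z + li) ^ (α * (p : ℝ) + 1)) *
        (∫ z in Ioi (0:ℝ), h z * (1 - F (z + li)) ^ p) := by
  have hpt : ∀ z, 0 ≤ z → ∀ w, 0 ≤ w →
      (1 - F (z + li)) ^ p / ((z + li) * (w + li) ^ (α * (p : ℝ))) +
        (1 - F (w + li)) ^ p / ((w + li) * (z + li) ^ (α * (p : ℝ))) -
        (1 - F (w + li)) ^ p / (z + li) ^ (α * (p : ℝ) + 1) -
        (1 - F (z + li)) ^ p / (w + li) ^ (α * (p : ℝ) + 1) ≤ 0 := by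
    intro z hz w hw
    simp only [hF]
    exact frechet_aux3 α hα p (by linarith) (by linarith)
  refine ⟨hpt, ?_⟩
  -- nonnegativity of h on positive arguments
  have hhnn : ∀ z : ℝ, 0 < z → 0 ≤ h z := by
    intro z hz
    have hzl : (0:ℝ) ≤ z + li := by linarith
    rw [hh, hf, hF]
    have h1 : 0 ≤ (z + li) ^ (-(α + 1)) := Real.rpow_nonneg hzl _
    exact mul_nonneg (mul_nonneg (mul_nonneg (by linarith) h1) (Real.exp_nonneg _))
      (pow_nonneg (Real.exp_nonneg _) q)
  set μ := volume.restrict (Ioi (0:ℝ)) with hμ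
  set G1 := fun z => h z * (1 - F (z + li)) ^ p / (z + li) with hG1
  set G2 := fun z => h z / (z + li) ^ (α * (p : ℝ)) with hG2
  set G3 := fun z => h z / (z + li) ^ (α * (p : ℝ) + 1) with hG3
  set G4 := fun z => h z * (1 - F (z + li)) ^ p with hG4
  have hi1 : Integrable G1 μ := hint1
  have hi2 : Integrable G2 μ := hint2
  have hi3 : Integrable G3 μ := hint3
  have hi4 : Integrable G4 μ := hint4
  have hI12 : Integrable (fun x : ℝ × ℝ => G1 x.1 * G2 x.2) (μ.prod μ) := hi1.mul_prod hi2
  have hI21 : Integrable (fun x : ℝ × ℝ => G2 x.1 * G1 x.2) (μ.prod μ) := hi2.mul_prod hi1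
  have hI34 : Integrable (fun x : ℝ × ℝ => G3 x.1 * G4 x.2) (μ.prod μ) := hi3.mul_prod hi4
  have hI43 : Integrable (fun x : ℝ × ℝ => G4 x.1 * G3 x.2) (μ.prod μ) := hi4.mul_prod hi3
  have hae : ∀ᵐ x ∂(μ.prod μ),
      G1 x.1 * G2 x.2 + G2 x.1 * G1 x.2 ≤ G3 x.1 * G4 x.2 + G4 x.1 * G3 x.2 := by
    have hrestr : μ.prod μ = (volume.prod volume).restrict (Ioi (0:ℝ) ×ˢ Ioi (0:ℝ)) := by
      rw [hμ, Measure.prod_restrict]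
    rw [hrestr]
    filter_upwards [ae_restrict_mem (measurableSet_Ioi.prod measurableSet_Ioi)] with x hx
    obtain ⟨hx1, hx2⟩ := hx
    have hx1' : (0:ℝ) < x.1 := hx1
    have hx2' : (0:ℝ) < x.2 := hx2
    have hE := hpt x.1 hx1'.le x.2 hx2'.le
    have hhh : 0 ≤ h x.1 * h x.2 := mul_nonneg (hhnn _ hx1') (hhnn _ hx2')
    have hkey : G1 x.1 * G2 x.2 + G2 x.1 * G1 x.2 - G3 x.1 * G4 x.2 - G4 x.1 * G3 x.2 =
        h x.1 * h x.2 *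
          ((1 - F (x.1 + li)) ^ p / ((x.1 + li) * (x.2 + li) ^ (α * (p : ℝ))) +
            (1 - F (x.2 + li)) ^ p / ((x.2 + li) * (x.1 + li) ^ (α * (p : ℝ))) -
            (1 - F (x.2 + li)) ^ p / (x.1 + li) ^ (α * (p : ℝ) + 1) -
            (1 - F (x.1 + li)) ^ p / (x.2 + li) ^ (α * (p : ℝ) + 1)) := by
      have ha : (0:ℝ) < x.1 + li := by linarith
      have hc : (0:ℝ) < x.2 + li := by linarith
      have n1 : ((x.1 + li) ^ (α * (p : ℝ))) ≠ 0 := (Real.rpow_pos_of_pos ha _).ne'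
      have n2 : ((x.2 + li) ^ (α * (p : ℝ))) ≠ 0 := (Real.rpow_pos_of_pos hc _).ne'
      have n3 : ((x.1 + li) ^ (α * (p : ℝ) + 1)) ≠ 0 := (Real.rpow_pos_of_pos ha _).ne'
      have n4 : ((x.2 + li) ^ (α * (p : ℝ) + 1)) ≠ 0 := (Real.rpow_pos_of_pos hc _).ne'
      rw [hG1, hG2, hG3, hG4]
      field_simp
    nlinarith [mul_nonpos_of_nonneg_of_nonpos hhh hE]
  have hmono : ∫ x : ℝ × ℝ, (G1 x.1 * G2 x.2 + G2 x.1 * G1 x.2) ∂(μ.prod μ) ≤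
      ∫ x : ℝ × ℝ, (G3 x.1 * G4 x.2 + G4 x.1 * G3 x.2) ∂(μ.prod μ) :=
    integral_mono_ae (hI12.add hI21) (hI34.add hI43) hae
  rw [integral_add hI12 hI21, integral_add hI34 hI43, integral_prod_mul,
    integral_prod_mul, integral_prod_mul, integral_prod_mul] at hmono
  linarith
end

section
/- Define h : (0, ∞) → ℝ by h(x) = e^{−1/x²} / ( x³ (1 − e^{−1/x²}) ). Then h is differentiable on (0, ∞) with derivative h'(x) = e^{−1/x²} ( 3x² (e^{−1/x²} − 1) + 2 ) / ( x⁶ (1 − e^{−1/x²})² ), and h is not monotonically decreasing on (0, ∞): there exist reals 0 < x₁ < x₂ with h(x₁) < h(x₂). -/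
theorem stmt19 (h : ℝ → ℝ)
    (hh : ∀ x, h x = Real.exp (-1 / x ^ 2) / (x ^ 3 * (1 - Real.exp (-1 / x ^ 2)))) :
    (∀ x ∈ Set.Ioi (0:ℝ),
      HasDerivAt h
        (Real.exp (-1 / x ^ 2) * (3 * x ^ 2 * (Real.exp (-1 / x ^ 2) - 1) + 2) /
          (x ^ 6 * (1 - Real.exp (-1 / x ^ 2)) ^ 2)) x) ∧
    ∃ x₁ x₂ : ℝ, 0 < x₁ ∧ x₁ < x₂ ∧ h x₁ < h x₂ := by
  have hfun : h = fun x => Real.exp (-1 / x ^ 2) / (x ^ 3 * (1 - Real.exp (-1 / x ^ 2))) :=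
    funext hh
  subst hfun
  constructor
  · intro x hx
    have hx0 : (0:ℝ) < x := hx
    have hxne : x ≠ 0 := ne_of_gt hx0
    have hE : Real.exp (-1 / x ^ 2) < 1 := by
      rw [Real.exp_lt_one_iff]
      exact div_neg_of_neg_of_pos (by norm_num) (by positivity)
    have hEpos : 0 < Real.exp (-1 / x ^ 2) := Real.exp_pos _
    have hu : HasDerivAt (fun x : ℝ => -1 / x ^ 2) (2 / x ^ 3) x := by
      have h1 : HasDerivAt (fun x : ℝ => x ^ 2) (2 * x) x := by
        simpa using hasDerivAt_pow 2 x
      have h2 := (h1.inv (pow_ne_zero 2 hxne)).neg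
      have heq : (-(fun x : ℝ => x ^ 2)⁻¹) = fun x : ℝ => -1 / x ^ 2 := by
        funext y; simp only [Pi.neg_apply, Pi.inv_apply]; ring
      rw [heq] at h2
      refine HasDerivAt.congr_deriv h2 ?_
      field_simp
    have hf : HasDerivAt (fun x : ℝ => Real.exp (-1 / x ^ 2))
        (Real.exp (-1 / x ^ 2) * (2 / x ^ 3)) x := hu.exp
    have hg : HasDerivAt (fun x : ℝ => x ^ 3 * (1 - Real.exp (-1 / x ^ 2)))
        (3 * x ^ 2 * (1 - Real.exp (-1 / x ^ 2)) +
          x ^ 3 * (0 - Real.exp (-1 / x ^ 2) * (2 / x ^ 3))) x := by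
      have h3 : HasDerivAt (fun x : ℝ => x ^ 3) (3 * x ^ 2) x := by
        simpa using hasDerivAt_pow 3 x
      exact h3.mul ((hasDerivAt_const x (1:ℝ)).sub hf)
    have hgne : x ^ 3 * (1 - Real.exp (-1 / x ^ 2)) ≠ 0 := by
      apply mul_ne_zero (pow_ne_zero 3 hxne)
      linarith
    have := hf.div hg hgne
    refine HasDerivAt.congr_deriv this ?_
    have h1E : (0:ℝ) < 1 - Real.exp (-1 / x ^ 2) := by linarith
    have h1E' : 1 - Real.exp (-1 / x ^ 2) ≠ 0 := h1E.ne'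
    field_simp
    ring
  · refine ⟨1/2, 1, by norm_num, by norm_num, ?_⟩
    simp only
    have ha : Real.exp (-1 / (1:ℝ) ^ 2) = Real.exp (-1) := by norm_num
    have hb : Real.exp (-1 / ((1:ℝ)/2) ^ 2) = Real.exp (-1) ^ 4 := by
      rw [← Real.exp_nat_mul]
      norm_num
    rw [ha, hb]
    set a := Real.exp (-1) with haa
    have ha0 : 0 < a := Real.exp_pos _
    have ha1 : a < 1/2 := by
      rw [haa, Real.exp_neg]
      rw [inv_lt_comm₀ (Real.exp_pos 1) (by norm_num)]
      have := Real.exp_one_gt_d9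
      norm_num
      linarith
    have h1 : (0:ℝ) < 1 - a ^ 4 := by
      have := pow_lt_one₀ ha0.le (by linarith : a < 1) (by norm_num : 4 ≠ 0)
      linarith
    have h2 : (0:ℝ) < 1 - a := by linarith
    rw [div_lt_div_iff₀ (by nlinarith) (by nlinarith)]
    nlinarith [pow_pos ha0 2, pow_pos ha0 3, pow_pos ha0 4]
end
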